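/- arXiv:1706.03298 — 12 statements merged into one kernel-verified Lean document; each statement's English description precedes it below -/
import Mathlib

section
/- If G is a (d₁,d₂)-biregular graph, then A² = (Q − d₁I)(Q − d₂I), where I is the identity matrix. -/
/-!
Write `Q - dI = diag(deg - d) + A`. Expanding `(diag f + A)(diag g + A)` with `f = deg - d₁`,
`g = deg - d₂` leaves `A²` plus two error terms: `diag (f g)`, which vanishes because every
vertex has degree `d₁` or `d₂`, and `diag f · A + A · diag g`, whose `(i, j)` entry is
`(deg i + deg j - d₁ - d₂) A i j`, which vanishes because the endpoints of an edge lie on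
opposite sides of the bipartition.
-/

open Matrix

namespace Matrix

variable {n α : Type*} [DecidableEq n]

theorem diagonal_add_sub_smul_one [Ring α] (f : n → α) (A : Matrix n n α) (c : α) :
    diagonal f + A - c • 1 = diagonal (fun i => f i - c) + A := by
  rw [smul_one_eq_diagonal, add_sub_right_comm, diagonal_sub]

theorem diagonal_add_mul_diagonal_add_eq_sq [Fintype n] [CommRing α] (f g : n → α) (A : Matrix n n α)
    (hfg : ∀ i, f i * g i = 0) (hA : ∀ i j, A i j ≠ 0 → f i + g j = 0) :
    (diagonal f + A) * (diagonal g + A) = A ^ 2 := by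
  have hdiag : diagonal f * diagonal g = 0 := by
    rw [diagonal_mul_diagonal, ← diagonal_zero]
    exact congrArg diagonal (funext hfg)
  have hcross : diagonal f * A + A * diagonal g = 0 := by
    ext i j
    rw [add_apply, diagonal_mul, mul_diagonal, zero_apply, mul_comm, ← mul_add]
    by_cases hij : A i j = 0
    · rw [hij, zero_mul]
    · rw [hA i j hij, mul_zero]
  calc (diagonal f + A) * (diagonal g + A)
      = diagonal f * diagonal g + (diagonal f * A + A * diagonal g) + A * A := by
        rw [add_mul, mul_add, mul_add]; abel
    _ = A ^ 2 := by rw [hdiag, hcross, zero_add, zero_add, sq]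

end Matrix

theorem SimpleGraph.degree_add_degree_of_adj {V : Type*} [Fintype V] {G : SimpleGraph V}
    [DecidableRel G.Adj] {d₁ d₂ : ℕ} {V₁ : Finset V}
    (hbip : ∀ u v : V, G.Adj u v → (u ∈ V₁ ↔ v ∉ V₁))
    (hdeg₁ : ∀ v ∈ V₁, G.degree v = d₁) (hdeg₂ : ∀ v ∉ V₁, G.degree v = d₂)
    {u v : V} (huv : G.Adj u v) : G.degree u + G.degree v = d₁ + d₂ := by
  by_cases hu : u ∈ V₁
  · rw [hdeg₁ u hu, hdeg₂ v ((hbip u v huv).mp hu)]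
  · have hv : v ∈ V₁ := not_not.mp (mt (hbip u v huv).mpr hu)
    rw [hdeg₂ u hu, hdeg₁ v hv, add_comm]

/-- If `G` is a `(d₁,d₂)`-biregular graph, then `A² = (Q − d₁I)(Q − d₂I)`. -/
theorem biregular_adj_sq_eq_signless
    {V : Type*} [Fintype V] [DecidableEq V]
    (G : SimpleGraph V) [DecidableRel G.Adj]
    (d₁ d₂ : ℕ) (V₁ : Finset V)
    (hbip : ∀ u v : V, G.Adj u v → (u ∈ V₁ ↔ v ∉ V₁))
    (hdeg₁ : ∀ v ∈ V₁, G.degree v = d₁)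
    (hdeg₂ : ∀ v ∉ V₁, G.degree v = d₂)
    (A D Q : Matrix V V ℝ)
    (hA : A = G.adjMatrix ℝ)
    (hD : D = Matrix.diagonal fun v => (G.degree v : ℝ))
    (hQ : Q = D + A) :
    A ^ 2 = (Q - (d₁ : ℝ) • 1) * (Q - (d₂ : ℝ) • 1) := by
  subst hQ hD
  rw [diagonal_add_sub_smul_one, diagonal_add_sub_smul_one]
  refine (diagonal_add_mul_diagonal_add_eq_sq _ _ A (fun v => ?_) (fun u v huv => ?_)).symm
  · by_cases hv : v ∈ V₁
    · simp [hdeg₁ v hv]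
    · simp [hdeg₂ v hv]
  · have hadj : G.Adj u v := by
      by_contra h
      simp [hA, h] at huv
    have := G.degree_add_degree_of_adj hbip hdeg₁ hdeg₂ hadj
    have hsum : (G.degree u : ℝ) + G.degree v = d₁ + d₂ := by exact_mod_cast this
    linarith
end

section
/- If G is a (d₁,d₂)-biregular graph, then A² = (L − d₁I)(L − d₂I), where I is the identity matrix. -/
/-!
Write `P = D - d₁I` and `Q = D - d₂I`, so that `L - d₁I = P - A` and `L - d₂I = Q - A`.
Every vertex has degree `d₁` or `d₂`, so the diagonal matrix `PQ` vanishes; and the two ends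
of an edge have degrees `d₁` and `d₂` in some order, so the `(u, v)` entry
`(deg u - d₁ + deg v - d₂) A_{uv}` of `PA + AQ` vanishes too.
Expanding `(P - A)(Q - A)` leaves `A²`.
-/

open Matrix

theorem sub_mul_sub_eq_sq_of_mul_eq_zero {R : Type*} [Ring R] {p q a : R}
    (hpq : p * q = 0) (hpa : p * a + a * q = 0) : (p - a) * (q - a) = a ^ 2 := by
  rw [sub_mul, mul_sub, mul_sub, hpq, eq_neg_of_add_eq_zero_left hpa, sq]
  abel

theorem Matrix.diagonal_mul_diagonal_eq_zero {n R : Type*} [Fintype n] [DecidableEq n]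
    [NonUnitalNonAssocSemiring R]
    {f g : n → R} (h : ∀ i, f i * g i = 0) : diagonal f * diagonal g = 0 := by
  rw [diagonal_mul_diagonal, funext h, diagonal_zero]

namespace SimpleGraph

variable {V : Type*} [Fintype V] [DecidableEq V] (G : SimpleGraph V) [DecidableRel G.Adj]

theorem diagonal_mul_adjMatrix_add_adjMatrix_mul_diagonal_eq_zero {R : Type*} [NonAssocSemiring R]
    {f g : V → R} (h : ∀ u v, G.Adj u v → f u + g v = 0) :
    diagonal f * G.adjMatrix R + G.adjMatrix R * diagonal g = 0 := by
  ext u v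
  rw [Matrix.add_apply, diagonal_mul, mul_diagonal, adjMatrix_apply, Matrix.zero_apply]
  by_cases huv : G.Adj u v
  · rw [if_pos huv, mul_one, one_mul, h u v huv]
  · rw [if_neg huv, mul_zero, zero_mul, add_zero]

variable {G} {V₁ : Finset V} {d₁ d₂ : ℕ}

theorem degree_add_degree_of_adj_of_biregular
    (hbip : ∀ u v : V, G.Adj u v → (u ∈ V₁ ↔ v ∉ V₁))
    (hdeg₁ : ∀ v ∈ V₁, G.degree v = d₁) (hdeg₂ : ∀ v ∉ V₁, G.degree v = d₂)
    {u v : V} (huv : G.Adj u v) : G.degree u + G.degree v = d₁ + d₂ := by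
  by_cases hu : u ∈ V₁
  · rw [hdeg₁ u hu, hdeg₂ v ((hbip u v huv).mp hu)]
  · have hv : v ∈ V₁ := not_not.mp (mt (hbip u v huv).mpr hu)
    rw [hdeg₂ u hu, hdeg₁ v hv, add_comm]

end SimpleGraph

/-- If `G` is a `(d₁,d₂)`-biregular graph, then `A² = (L − d₁I)(L − d₂I)`. -/
theorem biregular_adj_sq_eq_laplacian
    {V : Type*} [Fintype V] [DecidableEq V]
    (G : SimpleGraph V) [DecidableRel G.Adj]
    (d₁ d₂ : ℕ) (V₁ : Finset V)
    (hbip : ∀ u v : V, G.Adj u v → (u ∈ V₁ ↔ v ∉ V₁))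
    (hdeg₁ : ∀ v ∈ V₁, G.degree v = d₁)
    (hdeg₂ : ∀ v ∉ V₁, G.degree v = d₂)
    (A D L : Matrix V V ℝ)
    (hA : A = G.adjMatrix ℝ)
    (hD : D = Matrix.diagonal fun v => (G.degree v : ℝ))
    (hL : L = D - A) :
    A ^ 2 = (L - (d₁ : ℝ) • 1) * (L - (d₂ : ℝ) • 1) := by
  set P : ℕ → Matrix V V ℝ := fun d => diagonal fun v => (G.degree v : ℝ) - d
  have shift (d : ℕ) : L - (d : ℝ) • 1 = P d - A := by
    rw [hL, hD, smul_one_eq_diagonal, sub_right_comm, diagonal_sub]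
  have hPP : P d₁ * P d₂ = 0 := by
    refine diagonal_mul_diagonal_eq_zero fun v => ?_
    by_cases hv : v ∈ V₁
    · rw [hdeg₁ v hv, sub_self, zero_mul]
    · rw [hdeg₂ v hv, sub_self, mul_zero]
  have hPA : P d₁ * A + A * P d₂ = 0 := by
    refine hA ▸ G.diagonal_mul_adjMatrix_add_adjMatrix_mul_diagonal_eq_zero fun u v huv => ?_
    have hsum : (G.degree u : ℝ) + G.degree v = d₁ + d₂ := by
      exact_mod_cast SimpleGraph.degree_add_degree_of_adj_of_biregular hbip hdeg₁ hdeg₂ huv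
    linear_combination hsum
  rw [shift, shift, sub_mul_sub_eq_sq_of_mul_eq_zero hPP hPA]
end

section
/- Let G be a (d₁,d₂)-biregular graph on n vertices. If q₁, …, qₙ are the eigenvalues of Q listed with multiplicity, then (q₁−d₁)(q₁−d₂), …, (qₙ−d₁)(qₙ−d₂) are the eigenvalues of A² listed with multiplicity. Moreover, if λ is an eigenvalue of A² and q₁, q₂ are the two solutions of the equation λ = (x−d₁)(x−d₂), then Eig(Q,q₁) ⊕ Eig(Q,q₂) = Eig(A²,λ). -/
/-!
In a `(d₁, d₂)`-biregular graph `D` acts as `d₁` on `V₁` and as `d₂` on its complement, while `A`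
swaps the two sides. Hence `(D - d₁)(D - d₂) = 0` and `(D - d₁)A + A(D - d₂) = 0`, so that
`A² = (Q - d₁)(Q - d₂)` is a polynomial in the Hermitian matrix `Q`. The eigenvalues of `A²` are
then the images of those of `Q` (compare characteristic polynomials through the functional
calculus), and `A² - λ = (Q - q₁)(Q - q₂)`. The kernel of the latter is
`Eig(Q, q₁) ⊕ Eig(Q, q₂)`: by coprimality of `X - q₁` and `X - q₂` when `q₁ ≠ q₂`, and because
the symmetric `Q` is semisimple when `q₁ = q₂`.
-/

open Matrix Module Polynomial

lemma Polynomial.X_sub_C_mul_X_sub_C_eq_sub_C_of_solutions {K : Type*} [Field K]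
    {a b c q₁ q₂ : K} (h : ∀ x, (x - a) * (x - b) = c ↔ x = q₁ ∨ x = q₂) :
    (X - C q₁) * (X - C q₂) = (X - C a) * (X - C b) - C c := by
  have h₁ : (q₁ - a) * (q₁ - b) = c := (h q₁).mpr (Or.inl rfl)
  have h₂ : (q₂ - a) * (q₂ - b) = c := (h q₂).mpr (Or.inr rfl)
  have hsum : q₁ + q₂ = a + b := by
    -- `a + b - q₁` is the second root of `(x - a)(x - b) = c`, hence equal to `q₁` or `q₂`.
    rcases (h (a + b - q₁)).mp (by linear_combination h₁) with h' | h'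
    · have hq : (q₂ - q₁) * (q₂ - q₁) = 0 := by linear_combination h₂ - h₁ + (q₂ - q₁) * h'
      linear_combination sub_eq_zero.mp (mul_self_eq_zero.mp hq) - h'
    · linear_combination -h'
  have hprod : q₁ * q₂ = a * b - c := by linear_combination -h₁ + q₁ * hsum
  have hsumC : C q₁ + C q₂ = C a + C b := by simp only [← map_add, hsum]
  have hprodC : C q₁ * C q₂ = C a * C b - C c := by simp only [← map_mul, ← map_sub, hprod]
  linear_combination (-X) * hsumC + hprodC

theorem Fintype.exists_perm_apply_eq_of_map_univ_eq {α β : Type*} [Fintype α] [DecidableEq β]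
    {f g : α → β} (h : Finset.univ.val.map f = Finset.univ.val.map g) :
    ∃ σ : Equiv.Perm α, ∀ a, f (σ a) = g a := by
  classical
  have hfiber (b : β) : Fintype.card {a // g a = b} = Fintype.card {a // f a = b} := by
    have := congrArg (Multiset.count b) h.symm
    simp only [Multiset.count_map] at this
    simpa [Fintype.card_subtype, Finset.card, Finset.filter_val, eq_comm] using this
  exact ⟨Equiv.ofFiberEquiv fun b => Fintype.equivOfCardEq (hfiber b),
    Equiv.ofFiberEquiv_map _⟩

lemma Module.End.eigenspace_aeval {R M : Type*} [CommRing R] [AddCommGroup M] [Module R M]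
    (f : End R M) (p : R[X]) (μ : R) :
    (aeval f p).eigenspace μ = LinearMap.ker (aeval f (p - C μ)) := by
  rw [eigenspace_def, map_sub, aeval_C, Algebra.algebraMap_eq_smul_one]

lemma Module.End.IsFinitelySemisimple.ker_aeval_X_sub_C_mul_X_sub_C {K M : Type*} [Field K]
    [AddCommGroup M] [Module K M] {f : End K M} (hf : f.IsFinitelySemisimple) (a b : K) :
    LinearMap.ker (aeval f ((X - C a) * (X - C b))) = f.eigenspace a ⊔ f.eigenspace b := by
  have haeval (c : K) : aeval f (X - C c) = f - c • 1 := by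
    rw [map_sub, aeval_X, aeval_C, Algebra.algebraMap_eq_smul_one]
  rcases eq_or_ne a b with rfl | hab
  · rw [sup_idem, ← sq, map_pow, haeval, ← genEigenspace_nat]
    exact hf.genEigenspace_eq_eigenspace a (by norm_num)
  · rw [← sup_ker_aeval_eq_ker_aeval_mul_of_coprime f
      (isCoprime_X_sub_C_of_isUnit_sub (sub_ne_zero.mpr hab).isUnit), haeval, haeval,
      eigenspace_def, eigenspace_def]

lemma Matrix.mulVecLin_aeval {n R : Type*} [Fintype n] [DecidableEq n] [CommRing R]
    (A : Matrix n n R) (p : R[X]) : (aeval A p).mulVecLin = aeval A.mulVecLin p :=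
  (aeval_algHom_apply (toLinAlgEquiv' : Matrix n n R ≃ₐ[R] _) A p).symm

namespace Matrix.IsHermitian

variable {n 𝕜 : Type*} [Fintype n] [DecidableEq n] [RCLike 𝕜] {A B : Matrix n n 𝕜}

lemma exists_perm_eigenvalues_eq_eval (hA : A.IsHermitian) (hB : B.IsHermitian) (p : ℝ[X])
    (hBA : B = aeval A p) :
    ∃ σ : Equiv.Perm n, ∀ i, hB.eigenvalues (σ i) = p.eval (hA.eigenvalues i) := by
  have hcharpoly : B.charpoly = ∏ i, (X - C ((p.eval (hA.eigenvalues i) : ℝ) : 𝕜)) := by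
    rw [hBA, ← cfc_polynomial p A hA.isSelfAdjoint, hA.charpoly_cfc_eq]
  have hroots : Finset.univ.val.map (RCLike.ofReal ∘ hB.eigenvalues) =
      Finset.univ.val.map (RCLike.ofReal ∘ fun i => p.eval (hA.eigenvalues i) : n → 𝕜) := by
    rw [← hB.roots_charpoly_eq_eigenvalues, hcharpoly, Finset.prod_eq_multiset_prod,
      ← roots_multiset_prod_X_sub_C (Finset.univ.val.map (RCLike.ofReal ∘ _)), Multiset.map_map]
    rfl
  obtain ⟨σ, hσ⟩ := Fintype.exists_perm_apply_eq_of_map_univ_eq hroots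
  exact ⟨σ, fun i => RCLike.ofReal_injective (hσ i)⟩

lemma isFinitelySemisimple_mulVecLin (hA : A.IsHermitian) :
    Module.End.IsFinitelySemisimple A.mulVecLin := by
  have hsymm := isSymmetric_toEuclideanLin_iff.mpr hA
  rw [End.isFinitelySemisimple_iff_isSemisimple]
  exact (LinearEquiv.isSemisimple_iff _ A.toEuclideanLin (WithLp.linearEquiv 2 𝕜 (n → 𝕜)).symm
    rfl).mpr (End.isFinitelySemisimple_iff_isSemisimple.mp hsymm.isFinitelySemisimple)

end Matrix.IsHermitian

namespace SimpleGraph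

variable {V : Type*} [Fintype V] [DecidableEq V] (G : SimpleGraph V) [DecidableRel G.Adj]
  {d₁ d₂ : ℕ} {V₁ : Finset V}

lemma adjMatrix_sq_eq_aeval_of_biregular
    (hbip : ∀ u v : V, G.Adj u v → (u ∈ V₁ ↔ v ∉ V₁))
    (hdeg₁ : ∀ v ∈ V₁, G.degree v = d₁) (hdeg₂ : ∀ v ∉ V₁, G.degree v = d₂) :
    G.adjMatrix ℝ ^ 2 = aeval (diagonal (fun v => (G.degree v : ℝ)) + G.adjMatrix ℝ)
      ((X - C (d₁ : ℝ)) * (X - C (d₂ : ℝ))) := by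
  have hshift (d : ℝ) : aeval (diagonal (fun v => (G.degree v : ℝ)) + G.adjMatrix ℝ) (X - C d) =
      diagonal (fun v => (G.degree v : ℝ) - d) + G.adjMatrix ℝ := by
    rw [map_sub, aeval_X, aeval_C, algebraMap_eq_diagonal, add_sub_right_comm, diagonal_sub]
    rfl
  have hdiag : diagonal (fun v => (G.degree v : ℝ) - d₁) *
      diagonal (fun v => (G.degree v : ℝ) - d₂) = 0 := by
    rw [diagonal_mul_diagonal, ← diagonal_zero]
    congr 1
    funext v
    by_cases hv : v ∈ V₁
    · simp [hdeg₁ v hv]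
    · simp [hdeg₂ v hv]
  have hcross : diagonal (fun v => (G.degree v : ℝ) - d₁) * G.adjMatrix ℝ +
      G.adjMatrix ℝ * diagonal (fun v => (G.degree v : ℝ) - d₂) = 0 := by
    ext u v
    rw [Matrix.add_apply, diagonal_mul, mul_diagonal, Matrix.zero_apply, adjMatrix_apply]
    by_cases hadj : G.Adj u v
    · by_cases hu : u ∈ V₁
      · simp [hadj, hdeg₁ u hu, hdeg₂ v ((hbip u v hadj).mp hu)]
      · have hv : v ∈ V₁ := by by_contra hv; exact hu ((hbip u v hadj).mpr hv)
        simp [hadj, hdeg₂ u hu, hdeg₁ v hv]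
    · simp [hadj]
  rw [map_mul, hshift, hshift]
  generalize diagonal (fun v => (G.degree v : ℝ) - d₁) = δ₁ at hdiag hcross
  generalize diagonal (fun v => (G.degree v : ℝ) - d₂) = δ₂ at hdiag hcross
  generalize G.adjMatrix ℝ = A at hcross
  calc A ^ 2 = δ₁ * δ₂ + (δ₁ * A + A * δ₂) + A ^ 2 := by rw [hdiag, hcross, zero_add, zero_add]
    _ = (δ₁ + A) * (δ₂ + A) := by noncomm_ring

end SimpleGraph

/-- For a `(d₁,d₂)`-biregular graph: if `q₁, …, qₙ` are the eigenvalues of `Q`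
listed with multiplicity, then `(qᵢ − d₁)(qᵢ − d₂)` are the eigenvalues of `A²`
listed with multiplicity; moreover, if `λ` is an eigenvalue of `A²` and `q₁, q₂`
are the two solutions of `λ = (x − d₁)(x − d₂)`, then
`Eig(Q,q₁) ⊕ Eig(Q,q₂) = Eig(A²,λ)`. -/
theorem biregular_signless_eigenvalues_to_adj
    {V : Type*} [Fintype V] [DecidableEq V]
    (G : SimpleGraph V) [DecidableRel G.Adj]
    (d₁ d₂ : ℕ) (V₁ : Finset V)
    (hbip : ∀ u v : V, G.Adj u v → (u ∈ V₁ ↔ v ∉ V₁))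
    (hdeg₁ : ∀ v ∈ V₁, G.degree v = d₁)
    (hdeg₂ : ∀ v ∉ V₁, G.degree v = d₂)
    (A D Q : Matrix V V ℝ)
    (hA : A = G.adjMatrix ℝ)
    (hD : D = Matrix.diagonal fun v => (G.degree v : ℝ))
    (hQ : Q = D + A)
    (hQherm : Q.IsHermitian) (hA2herm : (A ^ 2).IsHermitian) :
    (∃ σ : Equiv.Perm V, ∀ v : V,
        hA2herm.eigenvalues (σ v) =
          (hQherm.eigenvalues v - (d₁ : ℝ)) * (hQherm.eigenvalues v - (d₂ : ℝ))) ∧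
    (∀ lam q₁ q₂ : ℝ,
        Module.End.HasEigenvalue (Matrix.mulVecLin (A ^ 2)) lam →
        (∀ x : ℝ, (x - (d₁ : ℝ)) * (x - (d₂ : ℝ)) = lam ↔ x = q₁ ∨ x = q₂) →
        Module.End.eigenspace (Matrix.mulVecLin Q) q₁ ⊔
            Module.End.eigenspace (Matrix.mulVecLin Q) q₂ =
          Module.End.eigenspace (Matrix.mulVecLin (A ^ 2)) lam) := by
  subst hA hD hQ
  have hA2 := G.adjMatrix_sq_eq_aeval_of_biregular hbip hdeg₁ hdeg₂
  refine ⟨?_, fun lam q₁ q₂ _ hsol => ?_⟩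
  · simpa using hQherm.exists_perm_eigenvalues_eq_eval hA2herm _ hA2
  · rw [hA2, mulVecLin_aeval, End.eigenspace_aeval,
      ← X_sub_C_mul_X_sub_C_eq_sub_C_of_solutions hsol]
    exact (hQherm.isFinitelySemisimple_mulVecLin.ker_aeval_X_sub_C_mul_X_sub_C q₁ q₂).symm
end

section
/- Let G be a (d₁,d₂)-biregular graph with d₁ ≠ d₂, and let v be an eigenvector of A with eigenvalue λ ≠ 0. Then v is not an eigenvector of Q. -/
/-!
Subtracting `A v = λ v` from `Q v = μ v` gives `D v = (μ - λ) v`, so every vertex in the support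
of `v` has degree `μ - λ`. Since `λ ≠ 0`, a vertex `w` with `v w ≠ 0` satisfies
`∑_{u ∼ w} v u = λ v w ≠ 0`, so some neighbour `u` of `w` is also in the support. Then `w` and `u`
have the same degree, although they lie on opposite sides of the bipartition.
-/

open Matrix

theorem Matrix.diagonal_apply_eq_of_add_mulVec_eq_smul {V K : Type*} [Fintype V] [DecidableEq V]
    [Field K] {d : V → K} {A : Matrix V V K} {v : V → K} {μ lam : K}
    (hQ : (diagonal d + A) *ᵥ v = μ • v) (hA : A *ᵥ v = lam • v) {w : V} (hw : v w ≠ 0) :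
    d w = μ - lam := by
  have h := congrFun hQ w
  rw [add_mulVec, hA, Pi.add_apply, mulVec_diagonal] at h
  simp only [Pi.smul_apply, smul_eq_mul] at h
  exact mul_right_cancel₀ hw (by linear_combination h)

theorem SimpleGraph.exists_adj_ne_zero_of_adjMatrix_mulVec_eq_smul {V R : Type*} [Fintype V]
    [Semiring R] [NoZeroDivisors R] {G : SimpleGraph V} [DecidableRel G.Adj] {v : V → R} {lam : R}
    (heig : G.adjMatrix R *ᵥ v = lam • v) (hlam : lam ≠ 0) {w : V} (hw : v w ≠ 0) :
    ∃ u, G.Adj w u ∧ v u ≠ 0 := by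
  have hsum : ∑ u ∈ G.neighborFinset w, v u = lam * v w := by
    rw [← G.adjMatrix_mulVec_apply, heig, Pi.smul_apply, smul_eq_mul]
  obtain ⟨u, hu, hvu⟩ := Finset.exists_ne_zero_of_sum_ne_zero (hsum ▸ mul_ne_zero hlam hw)
  exact ⟨u, (G.mem_neighborFinset w u).mp hu, hvu⟩

theorem SimpleGraph.degree_ne_of_adj_of_biregular {V : Type*} [Fintype V] {G : SimpleGraph V}
    [DecidableRel G.Adj] {d₁ d₂ : ℕ} (hne : d₁ ≠ d₂) {V₁ : Finset V}
    (hbip : ∀ u w : V, G.Adj u w → (u ∈ V₁ ↔ w ∉ V₁))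
    (hdeg₁ : ∀ w ∈ V₁, G.degree w = d₁) (hdeg₂ : ∀ w ∉ V₁, G.degree w = d₂)
    {u w : V} (h : G.Adj u w) : G.degree u ≠ G.degree w := by
  by_cases hu : u ∈ V₁
  · rw [hdeg₁ u hu, hdeg₂ w ((hbip u w h).mp hu)]
    exact hne
  · have hw : w ∈ V₁ := by simpa using mt (hbip u w h).mpr hu
    rw [hdeg₂ u hu, hdeg₁ w hw]
    exact hne.symm

/-- Let `G` be `(d₁,d₂)`-biregular with `d₁ ≠ d₂`, and let `v` be an eigenvector
of `A` with eigenvalue `λ ≠ 0`.  Then `v` is not an eigenvector of `Q`. -/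
theorem biregular_adj_eigenvector_not_signless_eigenvector
    {V : Type*} [Fintype V] [DecidableEq V]
    (G : SimpleGraph V) [DecidableRel G.Adj]
    (d₁ d₂ : ℕ) (hne : d₁ ≠ d₂) (V₁ : Finset V)
    (hbip : ∀ u w : V, G.Adj u w → (u ∈ V₁ ↔ w ∉ V₁))
    (hdeg₁ : ∀ w ∈ V₁, G.degree w = d₁)
    (hdeg₂ : ∀ w ∉ V₁, G.degree w = d₂)
    (A D Q : Matrix V V ℝ)
    (hA : A = G.adjMatrix ℝ)
    (hD : D = Matrix.diagonal fun w => (G.degree w : ℝ))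
    (hQ : Q = D + A)
    (v : V → ℝ) (hv : v ≠ 0) (lam : ℝ) (hlam : lam ≠ 0)
    (heig : A.mulVec v = lam • v) :
    ¬ ∃ μ : ℝ, Q.mulVec v = μ • v := by
  rintro ⟨μ, hμ⟩
  subst hQ hD hA
  obtain ⟨w, hw⟩ := Function.ne_iff.mp hv
  obtain ⟨u, hadj, hu⟩ := G.exists_adj_ne_zero_of_adjMatrix_mulVec_eq_smul heig hlam hw
  have hdeg_w := diagonal_apply_eq_of_add_mulVec_eq_smul hμ heig hw
  have hdeg_u := diagonal_apply_eq_of_add_mulVec_eq_smul hμ heig hu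
  exact G.degree_ne_of_adj_of_biregular hne hbip hdeg₁ hdeg₂ hadj
    (by exact_mod_cast hdeg_w.trans hdeg_u.symm)
end

section
/- Let G be a (d₁,d₂)-biregular graph, let μ ≠ 0 be an eigenvalue of A² with dim Eig(A²,μ) = m, and let q₁ ≠ q₂ be the two real roots of the equation μ = (x−d₁)(x−d₂). Then dim Eig(Q,q₁) = dim Eig(Q,q₂) = m/2 (in particular m is even). -/
/-!
Let `S` be the diagonal matrix that is `1` on `V₁` and `-1` on `V₂`. Bipartiteness says that `A`
anticommutes with `S`, and biregularity says `D = a + b S` with `a = (d₁ + d₂) / 2` and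
`b = (d₁ - d₂) / 2`. Since `q₁ + q₂ = 2a` and `q₁ q₂ = a² - b² - μ`, this gives
`(Q - q₁)(Q - q₂) = A² - μ`, so `Eig(A², μ) = Eig(Q, q₁) ⊕ Eig(Q, q₂)`. The matrix `T = S A`
satisfies `Q T + T Q = (q₁ + q₂) T`, so it swaps the two eigenspaces, and `T² = -A²`, so it is
injective on `Eig(A², μ)` because `μ ≠ 0`. Hence the two eigenspaces have the same dimension.
-/

open Matrix Module

section Anticommute

variable {K R : Type*} [CommRing K] [Ring R] [Algebra K R] {S A : R}

theorem mul_mul_self_of_anticommute (hSS : S * S = 1) (hAS : A * S = -(S * A)) :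
    S * A * (S * A) = -(A * A) := by
  rw [← mul_assoc, mul_assoc S A S, hAS, mul_neg, ← mul_assoc, hSS, one_mul, neg_mul]

theorem mul_add_mul_of_anticommute (hSS : S * S = 1) (hAS : A * S = -(S * A)) (a b : K) :
    (a • 1 + b • S + A) * (S * A) + S * A * (a • 1 + b • S + A) = (2 * a) • (S * A) := by
  have hSAS : S * A * S = -A := by rw [mul_assoc, hAS, mul_neg, ← mul_assoc, hSS, one_mul]
  have hASA : A * (S * A) = -(S * A * A) := by rw [← mul_assoc, hAS, neg_mul]
  simp only [add_mul, mul_add, smul_mul_assoc, mul_smul_comm, one_mul, mul_one, ← mul_assoc S S A,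
    hSS, hSAS, hASA]
  module

theorem sub_smul_one_mul_sub_smul_one_of_anticommute (hSS : S * S = 1) (hAS : A * S = -(S * A))
    {a b x y : K} (hxy : x + y = 2 * a) :
    (a • 1 + b • S + A - x • 1) * (a • 1 + b • S + A - y • 1) =
      A * A + (x * y - a ^ 2 + b ^ 2) • 1 := by
  have hsq : (b • S + A) * (b • S + A) = A * A + b ^ 2 • 1 := by
    simp only [add_mul, mul_add, smul_mul_assoc, mul_smul_comm, hSS, hAS]
    module
  have e : (a • 1 + b • S + A - x • 1) * (a • 1 + b • S + A - y • 1) =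
      (b • S + A) * (b • S + A) + (2 * a - x - y) • (b • S + A) + ((a - x) * (a - y)) • 1 := by
    simp only [add_mul, mul_add, sub_mul, mul_sub, smul_mul_assoc, mul_smul_comm, one_mul, mul_one]
    module
  rw [e, hsq, show 2 * a - x - y = 0 by linear_combination -hxy, zero_smul, add_zero, add_assoc,
    ← add_smul]
  congr 2
  linear_combination (-a) * hxy

end Anticommute

namespace Module.End

variable {K M : Type*} [Field K] [AddCommGroup M] [Module K M] {f g T : End K M} {x y μ c : K}

theorem apply_mem_eigenspace_of_mul_add_mul (h : f * T + T * f = c • T) {v : M}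
    (hv : v ∈ f.eigenspace x) : T v ∈ f.eigenspace (c - x) := by
  rw [mem_eigenspace_iff] at hv ⊢
  have hv' : f (T v) + T (f v) = c • T v := congrArg (· v) h
  rw [hv, map_smul] at hv'
  rw [sub_smul, ← hv', add_sub_cancel_right]

theorem eigenspace_sup_eigenspace (hxy : x ≠ y) (h : (f - x • 1) * (f - y • 1) = g - μ • 1) :
    f.eigenspace x ⊔ f.eigenspace y = g.eigenspace μ := by
  have hker (z : K) :
      f.eigenspace z = LinearMap.ker (Polynomial.aeval f (Polynomial.X - Polynomial.C z)) := by
    simp [eigenspace_def, Algebra.algebraMap_eq_smul_one]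
  rw [hker, hker, Polynomial.sup_ker_aeval_eq_ker_aeval_mul_of_coprime f
    (Polynomial.isCoprime_X_sub_C_of_isUnit_sub (sub_ne_zero.2 hxy).isUnit), eigenspace_def, ← h]
  simp [Algebra.algebraMap_eq_smul_one]

theorem finrank_eigenspace_add_finrank_eigenspace [FiniteDimensional K M] (hxy : x ≠ y)
    (h : (f - x • 1) * (f - y • 1) = g - μ • 1) :
    finrank K (f.eigenspace x) + finrank K (f.eigenspace y) = finrank K (g.eigenspace μ) := by
  rw [← eigenspace_sup_eigenspace hxy h, ← Submodule.finrank_sup_add_finrank_inf_eq,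
    (f.eigenspaces_iSupIndep.pairwiseDisjoint hxy).eq_bot, finrank_bot, add_zero]

theorem finrank_eigenspace_le_of_mul_add_mul [FiniteDimensional K M] (hc : x + y = c)
    (h : f * T + T * f = c • T) (hT : Disjoint (f.eigenspace x) (LinearMap.ker T)) :
    finrank K (f.eigenspace x) ≤ finrank K (f.eigenspace y) := by
  have hmaps : ∀ v ∈ f.eigenspace x, T v ∈ f.eigenspace y := fun v hv => by
    simpa [← hc] using apply_mem_eigenspace_of_mul_add_mul h hv
  exact LinearMap.finrank_le_finrank_of_injective ((LinearMap.injective_restrict_iff hmaps).2 hT)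

theorem finrank_eigenspace_eq_of_mul_add_mul [FiniteDimensional K M] (hxy : x ≠ y) (hμ : μ ≠ 0)
    (hfg : (f - x • 1) * (f - y • 1) = g - μ • 1) (hT : f * T + T * f = (x + y) • T)
    (hker : LinearMap.ker T ≤ LinearMap.ker g) :
    finrank K (f.eigenspace x) = finrank K (f.eigenspace y) := by
  have hsup := eigenspace_sup_eigenspace hxy hfg
  have hdisj : Disjoint (g.eigenspace μ) (LinearMap.ker T) :=
    (g.eigenspaces_iSupIndep.pairwiseDisjoint hμ).mono_right (g.eigenspace_zero ▸ hker)
  apply le_antisymm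
  · exact finrank_eigenspace_le_of_mul_add_mul rfl hT (hdisj.mono_left (hsup ▸ le_sup_left))
  · exact finrank_eigenspace_le_of_mul_add_mul (add_comm y x) hT
      (hdisj.mono_left (hsup ▸ le_sup_right))

theorem two_mul_finrank_eigenspace_of_anticommute [FiniteDimensional K M] {s α : End K M}
    (hss : s * s = 1) (hαs : α * s = -(s * α)) {a b : K} (hxy : x ≠ y) (hμ : μ ≠ 0)
    (hsum : x + y = 2 * a) (hprod : x * y - a ^ 2 + b ^ 2 = -μ) :
    2 * finrank K ((a • 1 + b • s + α).eigenspace x) = finrank K ((α ^ 2).eigenspace μ) ∧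
      2 * finrank K ((a • 1 + b • s + α).eigenspace y) = finrank K ((α ^ 2).eigenspace μ) := by
  have hfg : (a • 1 + b • s + α - x • 1) * (a • 1 + b • s + α - y • 1) = α ^ 2 - μ • 1 := by
    rw [sub_smul_one_mul_sub_smul_one_of_anticommute hss hαs hsum, hprod, sq, neg_smul,
      sub_eq_add_neg]
  have hT : (a • 1 + b • s + α) * (s * α) + s * α * (a • 1 + b • s + α) = (x + y) • (s * α) := by
    rw [mul_add_mul_of_anticommute hss hαs, hsum]
  have hker : LinearMap.ker (s * α) ≤ LinearMap.ker (α ^ 2) := by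
    intro v hv
    rw [LinearMap.mem_ker] at hv ⊢
    rw [sq, ← neg_neg (α * α), ← mul_mul_self_of_anticommute hss hαs, LinearMap.neg_apply,
      mul_apply, hv, map_zero, neg_zero]
  have heq := finrank_eigenspace_eq_of_mul_add_mul hxy hμ hfg hT hker
  have hadd := finrank_eigenspace_add_finrank_eigenspace hxy hfg
  omega

end Module.End

section SignMatrix

variable {V : Type*} [DecidableEq V] (V₁ : Finset V)

def signMatrix (R : Type*) [Ring R] : Matrix V V R :=
  diagonal fun w => if w ∈ V₁ then 1 else -1

variable {V₁}

theorem signMatrix_mul_self [Fintype V] {R : Type*} [Ring R] :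
    signMatrix V₁ R * signMatrix V₁ R = 1 := by
  rw [signMatrix, diagonal_mul_diagonal, ← diagonal_one]
  congr 1
  funext w
  split_ifs <;> simp

theorem adjMatrix_mul_signMatrix [Fintype V] {R : Type*} [Ring R] {G : SimpleGraph V}
    [DecidableRel G.Adj]    (hbip : ∀ u w : V, G.Adj u w → (u ∈ V₁ ↔ w ∉ V₁)) :
    G.adjMatrix R * signMatrix V₁ R = -(signMatrix V₁ R * G.adjMatrix R) := by
  ext u w
  rw [neg_apply, signMatrix, mul_diagonal, diagonal_mul, SimpleGraph.adjMatrix_apply]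
  by_cases huw : G.Adj u w
  · by_cases hu : u ∈ V₁
    · simp [huw, hu, (hbip u w huw).1 hu]
    · simp [huw, hu, not_not.1 (mt (hbip u w huw).2 hu)]
  · simp [huw]

theorem diagonal_eq_smul_one_add_smul_signMatrix {K : Type*} [Field K] [NeZero (2 : K)]
    {d : V → K} {c₁ c₂ : K} (h₁ : ∀ w ∈ V₁, d w = c₁) (h₂ : ∀ w ∉ V₁, d w = c₂) :
    diagonal d = ((c₁ + c₂) / 2) • 1 + ((c₁ - c₂) / 2) • signMatrix V₁ K := by
  rw [signMatrix, ← diagonal_one, ← diagonal_smul, ← diagonal_smul, diagonal_add]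
  congr 1
  funext w
  by_cases hw : w ∈ V₁
  · simp only [h₁ w hw, Pi.smul_apply, smul_eq_mul, mul_one, hw, ↓reduceIte]
    field_simp
    ring
  · simp only [h₂ w hw, Pi.smul_apply, smul_eq_mul, mul_one, hw, ↓reduceIte, mul_neg]
    field_simp
    ring

end SignMatrix

theorem biregular_signless_eigenspace_split_general
    {V : Type*} [Fintype V] [DecidableEq V]
    (G : SimpleGraph V) [DecidableRel G.Adj]
    (d₁ d₂ : ℕ) (V₁ : Finset V)
    (hbip : ∀ u w : V, G.Adj u w → (u ∈ V₁ ↔ w ∉ V₁))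
    (hdeg₁ : ∀ w ∈ V₁, G.degree w = d₁)
    (hdeg₂ : ∀ w ∉ V₁, G.degree w = d₂)
    (A D Q : Matrix V V ℝ)
    (hA : A = G.adjMatrix ℝ)
    (hD : D = Matrix.diagonal fun w => (G.degree w : ℝ))
    (hQ : Q = D + A)
    (μ : ℝ) (hμ : μ ≠ 0)
    (m : ℕ)
    (hm : m = Module.finrank ℝ
      (Module.End.eigenspace (Matrix.mulVecLin (A ^ 2)) μ))
    (q₁ q₂ : ℝ) (hq : q₁ ≠ q₂)
    (hq₁ : (q₁ - (d₁ : ℝ)) * (q₁ - (d₂ : ℝ)) = μ)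
    (hq₂ : (q₂ - (d₁ : ℝ)) * (q₂ - (d₂ : ℝ)) = μ) :
    Even m ∧
    Module.finrank ℝ (Module.End.eigenspace (Matrix.mulVecLin Q) q₁) = m / 2 ∧
    Module.finrank ℝ (Module.End.eigenspace (Matrix.mulVecLin Q) q₂) = m / 2 := by
  set a : ℝ := ((d₁ : ℝ) + d₂) / 2
  set b : ℝ := ((d₁ : ℝ) - d₂) / 2
  have hsum : q₁ + q₂ = 2 * a := mul_left_cancel₀ (sub_ne_zero.2 hq) <| by
    linear_combination hq₁ - hq₂
  have hprod : q₁ * q₂ - a ^ 2 + b ^ 2 = -μ := by linear_combination q₁ * hsum - hq₁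
  have hQ' : Q = a • 1 + b • signMatrix V₁ ℝ + A := by
    rw [hQ, hD, diagonal_eq_smul_one_add_smul_signMatrix (c₁ := (d₁ : ℝ)) (c₂ := d₂)
      (fun w hw => by rw [hdeg₁ w hw]) (fun w hw => by rw [hdeg₂ w hw])]
  let φ := Matrix.toLinAlgEquiv' (R := ℝ) (n := V)
  have hQφ : Matrix.mulVecLin Q = a • 1 + b • φ (signMatrix V₁ ℝ) + φ A := by
    change φ Q = _
    rw [hQ', map_add, map_add, map_smul, map_smul, map_one]
  have hAφ : Matrix.mulVecLin (A ^ 2) = φ A ^ 2 := map_pow φ A 2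
  obtain ⟨h₁, h₂⟩ := Module.End.two_mul_finrank_eigenspace_of_anticommute
    (s := φ (signMatrix V₁ ℝ)) (α := φ A) (by rw [← map_mul, signMatrix_mul_self, map_one])
    (by rw [← map_mul, ← map_mul, hA, adjMatrix_mul_signMatrix hbip, map_neg]) hq hμ hsum hprod
  rw [← hQφ, ← hAφ, ← hm] at h₁ h₂
  exact ⟨⟨_, h₁.symm.trans (two_mul _)⟩, by omega, by omega⟩

/-- For `G` a `(d₁,d₂)`-biregular graph, let `μ ≠ 0` be an eigenvalue of `A²`
with `dim Eig(A²,μ) = m` and let `q₁ ≠ q₂` be the two real roots of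
`μ = (x−d₁)(x−d₂)`.  Then `m` is even and
`dim Eig(Q,q₁) = dim Eig(Q,q₂) = m/2`. -/
theorem biregular_signless_eigenspace_split
    {V : Type*} [Fintype V] [DecidableEq V]
    (G : SimpleGraph V) [DecidableRel G.Adj]
    (d₁ d₂ : ℕ) (V₁ : Finset V)
    (hbip : ∀ u w : V, G.Adj u w → (u ∈ V₁ ↔ w ∉ V₁))
    (hdeg₁ : ∀ w ∈ V₁, G.degree w = d₁)
    (hdeg₂ : ∀ w ∉ V₁, G.degree w = d₂)
    (A D Q : Matrix V V ℝ)
    (hA : A = G.adjMatrix ℝ)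
    (hD : D = Matrix.diagonal fun w => (G.degree w : ℝ))
    (hQ : Q = D + A)
    (μ : ℝ) (hμ : μ ≠ 0)
    (hμeig : Module.End.HasEigenvalue (Matrix.mulVecLin (A ^ 2)) μ)
    (m : ℕ)
    (hm : m = Module.finrank ℝ
      (Module.End.eigenspace (Matrix.mulVecLin (A ^ 2)) μ))
    (q₁ q₂ : ℝ) (hq : q₁ ≠ q₂)
    (hq₁ : (q₁ - (d₁ : ℝ)) * (q₁ - (d₂ : ℝ)) = μ)
    (hq₂ : (q₂ - (d₁ : ℝ)) * (q₂ - (d₂ : ℝ)) = μ) :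
    Even m ∧
    Module.finrank ℝ (Module.End.eigenspace (Matrix.mulVecLin Q) q₁) = m / 2 ∧
    Module.finrank ℝ (Module.End.eigenspace (Matrix.mulVecLin Q) q₂) = m / 2 :=
  biregular_signless_eigenspace_split_general G d₁ d₂ V₁ hbip hdeg₁ hdeg₂ A D Q hA hD hQ μ hμ m hm
    q₁ q₂ hq hq₁ hq₂
end

section
/- Let G be a connected graph, r a positive integer, and f a real polynomial. If Q^r = f(A), or L^r = f(A), or L^r = f(Q), then G is regular. -/
/-!
In each of the three cases the degree matrix `D` is a linear combination of two matrices commuting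
with `M` (`M = Q^r` or `M = L^r`): the `r`-th root of `M`, and the matrix of which `M` is a
polynomial. Commuting with the diagonal `D` forces `M u v = 0` whenever `deg u ≠ deg v`.
For `M = Q^r` this is impossible along an edge `uv`, where `M u v ≥ (deg u)^(r-1) > 0`.
For `M = L^r` it gives `M (D 1) = D (M 1) = 0`; as `L` is symmetric, `L (D 1) = 0`, so the degree
vector is constant along edges.
Either way degrees agree along edges, and connectivity makes `G` regular.
-/

open Matrix Polynomial

theorem Polynomial.commute_aeval {R A : Type*} [CommSemiring R] [Semiring A] [Algebra R A]
    (a : A) (p : R[X]) : Commute a (aeval a p) := by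
  simpa using (Commute.all X p).map (aeval a)

namespace Matrix

variable {n R : Type*} [Fintype n]

theorem apply_eq_zero_of_commute_diagonal [DecidableEq n] [CommRing R] [NoZeroDivisors R]
    {d : n → R} {M : Matrix n n R} (h : Commute (diagonal d) M) {i j : n} (hij : d i ≠ d j) :
    M i j = 0 := by
  have hij' : d i * M i j = M i j * d j := by
    simpa only [diagonal_mul, mul_diagonal] using congr_fun₂ h.eq i j
  have : (d i - d j) * M i j = 0 := by rw [sub_mul, hij', mul_comm]; ring
  exact (mul_eq_zero.mp this).resolve_left (sub_ne_zero.mpr hij)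

theorem pow_succ_apply_pos [DecidableEq n] [Semiring R] [PartialOrder R] [IsStrictOrderedRing R]
    {M : Matrix n n R} (hM : ∀ i j, 0 ≤ M i j) {i j : n} (hii : 0 < M i i) (hij : 0 < M i j)
    (k : ℕ) : 0 < (M ^ (k + 1)) i j := by
  induction k with
  | zero => simpa using hij
  | succ k ih =>
    rw [pow_succ', mul_apply]
    exact Finset.sum_pos' (fun l _ => mul_nonneg (hM i l) (pow_apply_nonneg hM _ l j))
      ⟨i, Finset.mem_univ i, mul_pos hii ih⟩

variable [CommRing R] [LinearOrder R] [IsStrictOrderedRing R] {M : Matrix n n R} {w : n → R}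

theorem IsSymm.mulVec_eq_zero_of_mul_self (hM : M.IsSymm) (h : (M * M) *ᵥ w = 0) :
    M *ᵥ w = 0 := by
  refine dotProduct_self_eq_zero.mp ?_
  rw [dotProduct_mulVec, ← mulVec_transpose, hM.eq, mulVec_mulVec, h, zero_dotProduct]

theorem IsSymm.mulVec_eq_zero_of_pow [DecidableEq n] (hM : M.IsSymm) {k : ℕ} (hk : k ≠ 0)
    (h : M ^ k *ᵥ w = 0) : M *ᵥ w = 0 := by
  obtain ⟨k, rfl⟩ := Nat.exists_eq_succ_of_ne_zero hk
  induction k with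
  | zero => simpa using h
  | succ k ih =>
    refine ih (Nat.succ_ne_zero k) ?_
    rw [pow_succ', ← mulVec_mulVec]
    apply hM.mulVec_eq_zero_of_mul_self
    rwa [mulVec_mulVec, mul_assoc, ← pow_succ', ← pow_succ']

end Matrix

namespace SimpleGraph

variable {V : Type*}

theorem Preconnected.isRegularOfDegree_of_forall_adj {G : SimpleGraph V} [G.LocallyFinite]
    (hG : G.Preconnected) (h : ∀ u v, G.Adj u v → G.degree u = G.degree v) (v : V) :
    G.IsRegularOfDegree (G.degree v) := by
  intro u
  obtain ⟨p⟩ := hG u v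
  induction p with
  | nil => rfl
  | cons hadj _ ih => exact (h _ _ hadj).trans ih

variable [Fintype V] [DecidableEq V] (G : SimpleGraph V) [DecidableRel G.Adj]

theorem degree_eq_of_adj_of_commute_signless_pow {r : ℕ} (hr : r ≠ 0)
    (h : Commute (G.degMatrix ℝ) ((G.degMatrix ℝ + G.adjMatrix ℝ) ^ r)) {u v : V}
    (huv : G.Adj u v) : G.degree u = G.degree v := by
  obtain ⟨k, rfl⟩ := Nat.exists_eq_succ_of_ne_zero hr
  have hpos : 0 < ((G.degMatrix ℝ + G.adjMatrix ℝ) ^ (k + 1)) u v := by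
    refine pow_succ_apply_pos (fun i j => ?_) ?_ ?_ k
    · by_cases hij : i = j <;> simp [degMatrix, hij, adjMatrix_apply, apply_ite]
    · simpa [degMatrix] using G.degree_pos_iff_exists_adj u |>.mpr ⟨v, huv⟩
    · simp [degMatrix, G.ne_of_adj huv, huv]
  by_contra hne
  exact hpos.ne' (apply_eq_zero_of_commute_diagonal h (by exact_mod_cast hne))

theorem degree_eq_of_adj_of_commute_lapMatrix_pow {r : ℕ} (hr : r ≠ 0)
    (h : Commute (G.degMatrix ℝ) (G.lapMatrix ℝ ^ r)) {u v : V} (huv : G.Adj u v) :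
    G.degree u = G.degree v := by
  have hones : G.lapMatrix ℝ ^ r *ᵥ (fun _ => 1) = 0 := by
    obtain ⟨k, rfl⟩ := Nat.exists_eq_succ_of_ne_zero hr
    rw [pow_succ, ← mulVec_mulVec, lapMatrix_mulVec_const_eq_zero, mulVec_zero]
  have hdeg : G.lapMatrix ℝ ^ r *ᵥ (G.degMatrix ℝ *ᵥ fun _ => 1) = 0 := by
    rw [mulVec_mulVec, ← h.eq, ← mulVec_mulVec, hones, mulVec_zero]
  have := (G.lapMatrix_mulVec_eq_zero_iff_forall_adj.mp
    ((G.isSymm_lapMatrix ℝ).mulVec_eq_zero_of_pow hr hdeg)) u v huv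
  simpa [degMatrix_mulVec_apply] using this

end SimpleGraph

/-- If `G` is connected and `Q^r = f(A)`, `L^r = f(A)`, or `L^r = f(Q)` for some
polynomial `f` and positive integer `r`, then `G` is regular. -/
theorem regular_of_laplacian_pair_relation
    {V : Type*} [Fintype V] [DecidableEq V]
    (G : SimpleGraph V) [DecidableRel G.Adj] (hconn : G.Connected)
    (r : ℕ) (hr : 0 < r) (f : Polynomial ℝ)
    (A D Q L : Matrix V V ℝ)
    (hA : A = G.adjMatrix ℝ)
    (hD : D = Matrix.diagonal fun v => (G.degree v : ℝ))
    (hQ : Q = D + A)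
    (hL : L = D - A)
    (hrel : Q ^ r = Polynomial.aeval A f ∨
            L ^ r = Polynomial.aeval A f ∨
            L ^ r = Polynomial.aeval Q f) :
    ∃ d : ℕ, G.IsRegularOfDegree d := by
  have hQr : Commute Q (Q ^ r) := (Commute.refl Q).pow_right r
  have hLr : Commute L (L ^ r) := (Commute.refl L).pow_right r
  have hcomm : Commute D (Q ^ r) ∨ Commute D (L ^ r) := by
    rcases hrel with h | h | h
    · have hDQA : D = Q - A := by rw [hQ, add_sub_cancel_right]
      exact .inl (hDQA ▸ hQr.sub_left (h ▸ commute_aeval A f))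
    · have hDLA : D = L + A := by rw [hL, sub_add_cancel]
      exact .inr (hDLA ▸ hLr.add_left (h ▸ commute_aeval A f))
    · have hDQL : D = (2⁻¹ : ℝ) • (Q + L) := by rw [hQ, hL]; module
      exact .inr (hDQL ▸ ((h ▸ commute_aeval Q f).add_left hLr).smul_left _)
  subst hA hD hQ hL
  refine ⟨_, hconn.preconnected.isRegularOfDegree_of_forall_adj (fun u v huv => ?_)
    hconn.nonempty.some⟩
  rcases hcomm with h | h
  · exact G.degree_eq_of_adj_of_commute_signless_pow hr.ne' h huv
  · exact G.degree_eq_of_adj_of_commute_lapMatrix_pow hr.ne' h huv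
end

section
/- Let G be a connected graph, r a positive integer, and f a real polynomial. If Q^r = f(L), then G is regular. -/
/-!
The all-ones vector `𝟙` is killed by `L`, hence `f(L) 𝟙 = f(0) 𝟙`, so `𝟙` is an eigenvector of
`Q ^ r`. The signless Laplacian is `Q = N Nᵀ` for the unoriented incidence matrix `N`, so it is
positive semidefinite; in an orthonormal eigenbasis of `Q`, injectivity of `t ↦ t ^ r` on `[0, ∞)`
makes every eigenvector of `Q ^ r` an eigenvector of `Q`. Finally `(Q 𝟙)_v = 2 deg v`, so
`Q 𝟙 = s 𝟙` forces all degrees to be equal.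
-/

open Matrix Polynomial
open scoped ComplexOrder

namespace Matrix

variable {n R : Type*} [Fintype n] [DecidableEq n]

theorem aeval_mulVec_of_mulVec_eq_smul [CommRing R] {M : Matrix n n R} {v : n → R} {a : R}
    (h : M *ᵥ v = a • v) (p : R[X]) : aeval M p *ᵥ v = p.eval a • v := by
  have h' : toLinAlgEquiv' M v = a • v := by rwa [toLinAlgEquiv'_apply]
  have := Module.End.aeval_apply_of_mem_apply_eq_smul (p := p) h'
  rwa [aeval_algEquiv, AlgHom.comp_apply] at this

theorem conjStarAlgAut_mulVec_eq_smul_iff [CommRing R] [StarRing R] (U : unitaryGroup n R)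
    (B : Matrix n n R) (x : n → R) (c : R) :
    Unitary.conjStarAlgAut R _ U B *ᵥ x = c • x ↔
      B *ᵥ (star (U : Matrix n n R) *ᵥ x) = c • (star (U : Matrix n n R) *ᵥ x) := by
  have hUU : (U : Matrix n n R) * star (U : Matrix n n R) = 1 := Unitary.coe_mul_star_self U
  have hUU' : star (U : Matrix n n R) * (U : Matrix n n R) = 1 := Unitary.coe_star_mul_self U
  rw [Unitary.conjStarAlgAut_apply]
  constructor
  · intro h
    rw [mulVec_mulVec, ← mulVec_smul, ← h, mulVec_mulVec]
    simp only [← Matrix.mul_assoc, hUU', Matrix.one_mul]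
  · intro h
    rw [← mulVec_mulVec, ← mulVec_mulVec, h, mulVec_smul, mulVec_mulVec, hUU, one_mulVec]

theorem exists_diagonal_mulVec_eq_smul_of_pow_mulVec_eq_smul [CommRing R] [IsDomain R]
    {d : n → R} {r : ℕ} (hd : Set.InjOn (fun a : R => a ^ r) (Set.range d)) {y : n → R} {c : R}
    (h : diagonal d ^ r *ᵥ y = c • y) : ∃ s : R, diagonal d *ᵥ y = s • y := by
  simp only [diagonal_pow, mulVec_diagonal, funext_iff, Pi.smul_apply, smul_eq_mul,
    Pi.pow_apply] at h ⊢
  by_cases hy : y = 0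
  · exact ⟨0, by simp [hy]⟩
  obtain ⟨i₀, hi₀⟩ := Function.ne_iff.mp hy
  refine ⟨d i₀, fun i => ?_⟩
  rcases eq_or_ne (y i) 0 with hi | hi
  · simp [hi]
  have hpow : d i ^ r = d i₀ ^ r :=
    (mul_right_cancel₀ hi (h i)).trans (mul_right_cancel₀ hi₀ (h i₀)).symm
  rw [hd ⟨i, rfl⟩ ⟨i₀, rfl⟩ hpow]

theorem PosSemidef.exists_mulVec_eq_smul_of_pow_mulVec_eq_smul {𝕜 : Type*} [RCLike 𝕜]
    {A : Matrix n n 𝕜} (hA : A.PosSemidef) {r : ℕ} (hr : r ≠ 0) {x : n → 𝕜} {c : 𝕜}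
    (h : A ^ r *ᵥ x = c • x) : ∃ s : 𝕜, A *ᵥ x = s • x := by
  have hspec := hA.isHermitian.spectral_theorem
  have hinj : Set.InjOn (fun a : 𝕜 => a ^ r)
      (Set.range (RCLike.ofReal ∘ hA.isHermitian.eigenvalues : n → 𝕜)) := by
    rintro _ ⟨i, rfl⟩ _ ⟨j, rfl⟩ hij
    simp only [Function.comp_apply, ← RCLike.ofReal_pow, RCLike.ofReal_inj] at hij ⊢
    exact (pow_left_inj₀ (hA.eigenvalues_nonneg i) (hA.eigenvalues_nonneg j) hr).mp hij
  rw [hspec, ← map_pow, conjStarAlgAut_mulVec_eq_smul_iff] at h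
  obtain ⟨s, hs⟩ := exists_diagonal_mulVec_eq_smul_of_pow_mulVec_eq_smul hinj h
  exact ⟨s, by rw [hspec, conjStarAlgAut_mulVec_eq_smul_iff]; exact hs⟩

end Matrix

namespace SimpleGraph

variable {V R : Type*} [Fintype V] [DecidableEq V] (G : SimpleGraph V) [DecidableRel G.Adj]

def signlessLapMatrix (R : Type*) [AddMonoidWithOne R] : Matrix V V R :=
  G.degMatrix R + G.adjMatrix R

theorem incMatrix_mul_transpose_eq_signlessLapMatrix [Semiring R] :
    G.incMatrix R * (G.incMatrix R)ᵀ = G.signlessLapMatrix R := by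
  ext a b
  rw [incMatrix_mul_transpose, signlessLapMatrix, degMatrix]
  by_cases hab : a = b
  · subst hab; simp
  · simp [hab, adjMatrix_apply]

variable (R) in
theorem posSemidef_signlessLapMatrix [CommRing R] [PartialOrder R] [StarRing R]
    [StarOrderedRing R] [TrivialStar R] : (G.signlessLapMatrix R).PosSemidef := by
  rw [← incMatrix_mul_transpose_eq_signlessLapMatrix, ← conjTranspose_eq_transpose_of_trivial]
  exact posSemidef_self_mul_conjTranspose _

theorem signlessLapMatrix_mulVec_const_apply [NonAssocSemiring R] (v : V) :
    (G.signlessLapMatrix R *ᵥ fun _ => 1) v = 2 * G.degree v := by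
  have hadj : (G.adjMatrix R *ᵥ fun _ => 1) v = G.degree v * 1 := adjMatrix_mulVec_const_apply
  rw [signlessLapMatrix, add_mulVec, Pi.add_apply, degMatrix_mulVec_apply, hadj, mul_one,
    two_mul]

theorem exists_isRegularOfDegree_of_signlessLapMatrix_mulVec_const_eq_smul [NonAssocSemiring R]
    [CharZero R] {s : R} (h : (G.signlessLapMatrix R *ᵥ fun _ => 1) = s • fun _ => 1) :
    ∃ d, G.IsRegularOfDegree d := by
  rcases isEmpty_or_nonempty V with _ | ⟨⟨v₀⟩⟩
  · exact ⟨0, fun v => isEmptyElim v⟩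
  have h2deg (v : V) : ((2 * G.degree v : ℕ) : R) = s := by
    simpa [signlessLapMatrix_mulVec_const_apply] using congr_fun h v
  exact ⟨G.degree v₀, fun v => by
    have := Nat.cast_injective ((h2deg v).trans (h2deg v₀).symm)
    omega⟩

end SimpleGraph

theorem regular_of_signless_pow_eq_poly_laplacian_general
    {V : Type*} [Fintype V] [DecidableEq V]
    (G : SimpleGraph V) [DecidableRel G.Adj]
    (r : ℕ) (hr : 0 < r) (f : Polynomial ℝ)
    (A D Q L : Matrix V V ℝ)
    (hA : A = G.adjMatrix ℝ)
    (hD : D = Matrix.diagonal fun v => (G.degree v : ℝ))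
    (hQ : Q = D + A)
    (hL : L = D - A)
    (hrel : Q ^ r = Polynomial.aeval L f) :
    ∃ d : ℕ, G.IsRegularOfDegree d := by
  obtain rfl : Q = G.signlessLapMatrix ℝ := by rw [hQ, hD, hA]; rfl
  obtain rfl : L = G.lapMatrix ℝ := by rw [hL, hD, hA]; rfl
  have hpow : G.signlessLapMatrix ℝ ^ r *ᵥ (fun _ => 1) = f.eval 0 • fun _ => 1 := by
    rw [hrel]
    exact aeval_mulVec_of_mulVec_eq_smul (by rw [G.lapMatrix_mulVec_const_eq_zero, zero_smul]) f
  obtain ⟨s, hs⟩ :=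
    (G.posSemidef_signlessLapMatrix ℝ).exists_mulVec_eq_smul_of_pow_mulVec_eq_smul hr.ne' hpow
  exact G.exists_isRegularOfDegree_of_signlessLapMatrix_mulVec_const_eq_smul hs

/-- If `G` is connected and `Q^r = f(L)` for some polynomial `f` and positive
integer `r`, then `G` is regular. -/
theorem regular_of_signless_pow_eq_poly_laplacian
    {V : Type*} [Fintype V] [DecidableEq V]
    (G : SimpleGraph V) [DecidableRel G.Adj] (hconn : G.Connected)
    (r : ℕ) (hr : 0 < r) (f : Polynomial ℝ)
    (A D Q L : Matrix V V ℝ)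
    (hA : A = G.adjMatrix ℝ)
    (hD : D = Matrix.diagonal fun v => (G.degree v : ℝ))
    (hQ : Q = D + A)
    (hL : L = D - A)
    (hrel : Q ^ r = Polynomial.aeval L f) :
    ∃ d : ℕ, G.IsRegularOfDegree d :=
  regular_of_signless_pow_eq_poly_laplacian_general G r hr f A D Q L hA hD hQ hL hrel
end

section
/- Let G be a connected graph, r a positive integer, and f a real polynomial, and suppose A^r = f(Q) or A^r = f(L). If r is odd or G is not bipartite, then G is regular. -/
/-!
If `A ^ r = f (D ± A)`, then `A ^ r` commutes with `D ± A` and with `A`, hence with the degree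
matrix `D`, and so does every power `A ^ (r * k)`. Comparing entries, `(d u - d v) (A ^ (r * k)) u v = 0`,
and `(A ^ (r * k)) u v` counts the walks of length `r * k` from `u` to `v`. For an edge `uv` such a
walk exists for some `k`: if `r` is odd, go back and forth along the edge; if `G` is not
bipartite, the edge followed by an odd closed walk at `v` has even length `ℓ` and can be padded
to length `r * ℓ`. Hence adjacent vertices have equal degree, and connectivity finishes.
-/

open Matrix Polynomial

section CommuteAeval

variable {R S : Type*} [CommSemiring R] [Ring S] [Algebra R S] {d x : S} {r : ℕ} {f : R[X]}

theorem commute_of_pow_eq_aeval_add (h : x ^ r = aeval (d + x) f) : Commute d (x ^ r) := by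
  have hsum : Commute (d + x) (x ^ r) := by
    simpa [h] using (commute_X f).map (aeval (d + x))
  simpa using hsum.sub_left (Commute.self_pow x r)

theorem commute_of_pow_eq_aeval_sub (h : x ^ r = aeval (d - x) f) : Commute d (x ^ r) := by
  have hdiff : Commute (d - x) (x ^ r) := by
    simpa [h] using (commute_X f).map (aeval (d - x))
  simpa using hdiff.add_left (Commute.self_pow x r)

end CommuteAeval

theorem Matrix.apply_eq_of_commute_diagonal {n R : Type*} [Fintype n] [DecidableEq n]
    [CommRing R] [NoZeroDivisors R] {d : n → R} {M : Matrix n n R}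
    (h : Commute (diagonal d) M) {i j : n} (hM : M i j ≠ 0) : d i = d j := by
  have hij := congrFun (congrFun h.eq i) j
  rw [diagonal_mul, mul_diagonal, mul_comm] at hij
  exact mul_left_cancel₀ hM hij

namespace SimpleGraph

variable {V : Type*} {G : SimpleGraph V}

theorem Walk.apply_eq_of_forall_adj {β : Type*} {f : V → β}
    (hf : ∀ x y, G.Adj x y → f x = f y) {u v : V} (p : G.Walk u v) : f u = f v := by
  induction p with
  | nil => rfl
  | cons h _ ih => exact (hf _ _ h).trans ih

theorem Walk.exists_length_eq_add_two_mul {u v w : V} (h : G.Adj u w) (p : G.Walk u v) (t : ℕ) :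
    ∃ q : G.Walk u v, q.length = p.length + 2 * t := by
  induction t with
  | zero => exact ⟨p, rfl⟩
  | succ t ih =>
    obtain ⟨q, hq⟩ := ih
    exact ⟨.cons h (.cons h.symm q), by simp only [Walk.length_cons, hq]; ring⟩

theorem exists_walk_length_eq_of_adj_of_odd {u v : V} (huv : G.Adj u v) {r : ℕ} (hr : Odd r) :
    ∃ p : G.Walk u v, p.length = r := by
  obtain ⟨t, rfl⟩ := hr
  obtain ⟨p, hp⟩ := huv.toWalk.exists_length_eq_add_two_mul huv t
  exact ⟨p, by simp [hp]; ring⟩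

theorem exists_walk_length_eq_mul_of_adj_of_odd_loop {u v : V} (huv : G.Adj u v)
    (c : G.Walk v v) (hc : Odd c.length) {r : ℕ} (hr : 0 < r) :
    ∃ p : G.Walk u v, p.length = r * (c.length + 1) := by
  obtain ⟨a, ha⟩ := hc
  obtain ⟨p, hp⟩ := (Walk.cons huv c).exists_length_eq_add_two_mul huv ((r - 1) * (a + 1))
  refine ⟨p, ?_⟩
  obtain ⟨s, rfl⟩ := Nat.exists_eq_add_of_lt hr
  rw [hp, Walk.length_cons, ha]
  simp only [zero_add, Nat.add_sub_cancel]
  ring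

theorem IsBipartite.exists_set_forall_adj_mem_iff_notMem (h : G.IsBipartite) :
    ∃ s : Set V, ∀ u v, G.Adj u v → (u ∈ s ↔ v ∉ s) := by
  obtain ⟨s, t, hdisj, hst⟩ := h.exists_isBipartiteWith
  refine ⟨s, fun u v huv => ?_⟩
  rcases hst huv with ⟨hu, hv⟩ | ⟨hu, hv⟩
  · exact iff_of_true hu (Set.disjoint_right.mp hdisj hv)
  · exact iff_of_false (Set.disjoint_right.mp hdisj hu) (not_not.mpr hv)

theorem Preconnected.exists_odd_loop_of_not_isBipartite (hG : G.Preconnected)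
    (h : ¬ G.IsBipartite) (v : V) : ∃ c : G.Walk v v, Odd c.length := by
  obtain ⟨x, c, hc⟩ : ∃ x, ∃ c : G.Walk x x, Odd c.length := by
    simpa [two_colorable_iff_forall_loop_even] using h
  obtain ⟨q⟩ := hG v x
  refine ⟨q.append (c.append q.reverse), ?_⟩
  simp only [Walk.length_append, Walk.length_reverse]
  rw [show q.length + (c.length + q.length) = c.length + 2 * q.length by ring]
  exact hc.add_even (even_two_mul _)

theorem exists_walk_length_eq_mul_of_adj (hG : G.Preconnected) {u v : V} (huv : G.Adj u v)
    {r : ℕ} (hr : 0 < r) (hcase : Odd r ∨ ¬ G.IsBipartite) :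
    ∃ k, ∃ p : G.Walk u v, p.length = r * k := by
  rcases hcase with hodd | hnb
  · exact ⟨1, by simpa using exists_walk_length_eq_of_adj_of_odd huv hodd⟩
  · obtain ⟨c, hc⟩ := hG.exists_odd_loop_of_not_isBipartite hnb v
    exact ⟨_, exists_walk_length_eq_mul_of_adj_of_odd_loop huv c hc hr⟩

theorem Walk.adjMatrix_pow_length_apply_pos [Fintype V] [DecidableEq V] [DecidableRel G.Adj]
    {R : Type*} [Semiring R] [PartialOrder R] [IsStrictOrderedRing R]
    {u v : V} (p : G.Walk u v) : 0 < (G.adjMatrix R ^ p.length) u v := by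
  rw [adjMatrix_pow_apply_eq_card_walk]
  have : Nonempty { q : G.Walk u v | q.length = p.length } := ⟨⟨p, rfl⟩⟩
  exact_mod_cast Fintype.card_pos

theorem Connected.isRegularOfDegree_of_forall_adj [Fintype V] [DecidableRel G.Adj]
    (hG : G.Connected) (h : ∀ u v, G.Adj u v → G.degree u = G.degree v) :
    ∃ d, G.IsRegularOfDegree d := by
  obtain ⟨v₀⟩ := hG.nonempty
  exact ⟨G.degree v₀, fun v => (hG v v₀).elim (Walk.apply_eq_of_forall_adj h)⟩

end SimpleGraph

/-- Suppose `G` is connected and `A^r = f(Q)` or `A^r = f(L)` for some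
polynomial `f` and positive integer `r`.  If `r` is odd or `G` is not
bipartite, then `G` is regular. -/
theorem regular_of_adj_pow_relation_odd_or_nonbipartite
    {V : Type*} [Fintype V] [DecidableEq V]
    (G : SimpleGraph V) [DecidableRel G.Adj] (hconn : G.Connected)
    (r : ℕ) (hr : 0 < r) (f : Polynomial ℝ)
    (A D Q L : Matrix V V ℝ)
    (hA : A = G.adjMatrix ℝ)
    (hD : D = Matrix.diagonal fun v => (G.degree v : ℝ))
    (hQ : Q = D + A)
    (hL : L = D - A)
    (hrel : A ^ r = Polynomial.aeval Q f ∨ A ^ r = Polynomial.aeval L f)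
    (hcase : Odd r ∨
      ¬ ∃ V₁ : Set V, ∀ u v : V, G.Adj u v → (u ∈ V₁ ↔ v ∉ V₁)) :
    ∃ d : ℕ, G.IsRegularOfDegree d := by
  subst hA hD hQ hL
  have hcomm := hrel.elim commute_of_pow_eq_aeval_add commute_of_pow_eq_aeval_sub
  refine hconn.isRegularOfDegree_of_forall_adj fun u v huv => ?_
  obtain ⟨k, p, hp⟩ := SimpleGraph.exists_walk_length_eq_mul_of_adj hconn.preconnected huv hr
    (hcase.imp_right (mt SimpleGraph.IsBipartite.exists_set_forall_adj_mem_iff_notMem))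
  have hpos := p.adjMatrix_pow_length_apply_pos (R := ℝ)
  rw [hp, pow_mul] at hpos
  exact_mod_cast Matrix.apply_eq_of_commute_diagonal (hcomm.pow_right k) hpos.ne'
end

section
/- Let G be a connected bipartite graph with bipartition V₁ ∪ V₂. If either the all-ones vector 𝟏, or the vector 𝟏′ that equals 1 on V₁ and −1 on V₂, is an eigenvector of A², then G is biregular. -/
open Matrix

/-!
Write `δ` for the minimum degree and `t v = ∑_{u ∼ v} deg u` for the 2-degree of `v`. Then
`A² 𝟏 = t` and, since `A 𝟏′ = -deg · 𝟏′` on a bipartite graph, `A² 𝟏′ = t · 𝟏′`; so either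
eigenvector hypothesis says that `t` is constant, say `t ≡ m`. As `t v ≥ δ · deg v`, a vertex of
degree `δ` has all its neighbours of degree `m / δ`, and a vertex of degree `m / δ` has all its
neighbours of degree `δ`. By connectivity these two values alternate, starting from a vertex of
minimum degree, between the two sides of the bipartition.
-/

def signVector {V : Type*} (R : Type*) [One R] [Neg R] [DecidableEq V] (V₁ : Finset V) : V → R :=
  fun v => if v ∈ V₁ then 1 else -1

namespace SimpleGraph

variable {V : Type*}

theorem Preconnected.forall_of_adj_imp {G : SimpleGraph V} (hG : G.Preconnected) {P : V → Prop}
    (hP : ∀ u v, G.Adj u v → P u → P v) {v₀ : V} (h₀ : P v₀) (v : V) : P v := by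
  obtain ⟨p⟩ := hG v₀ v
  induction p with
  | nil => exact h₀
  | cons huv _ ih => exact ih (hP _ _ huv h₀)

theorem signVector_eq_neg_of_adj [DecidableEq V] {R : Type*} [Ring R] {G : SimpleGraph V}
    {V₁ : Finset V} (hV₁ : ∀ u v, G.Adj u v → (u ∈ V₁ ↔ v ∉ V₁)) {u v : V} (huv : G.Adj u v) :
    signVector R V₁ v = -signVector R V₁ u := by
  have := hV₁ u v huv
  by_cases hu : u ∈ V₁ <;> by_cases hv : v ∈ V₁ <;> simp_all [signVector]

def IsBiregular (G : SimpleGraph V) [Fintype V] [DecidableRel G.Adj] : Prop :=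
  ∃ (W : Set V) (d₁ d₂ : ℕ), (∀ u v : V, G.Adj u v → (u ∈ W ↔ v ∉ W)) ∧
    (∀ v ∈ W, G.degree v = d₁) ∧ (∀ v ∉ W, G.degree v = d₂)

variable [Fintype V] (G : SimpleGraph V) [DecidableRel G.Adj]

def twoDegree (v : V) : ℕ := ∑ u ∈ G.neighborFinset v, G.degree u

theorem minDegree_mul_degree_le_twoDegree (v : V) :
    G.minDegree * G.degree v ≤ G.twoDegree v := by
  calc G.minDegree * G.degree v = ∑ _u ∈ G.neighborFinset v, G.minDegree := by simp [mul_comm]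
    _ ≤ G.twoDegree v := Finset.sum_le_sum fun u _ => G.minDegree_le_degree u

section adjMatrix

variable [DecidableEq V] {R : Type*}

theorem adjMatrix_sq_mulVec_one_apply [Semiring R] (v : V) :
    (G.adjMatrix R ^ 2 *ᵥ fun _ => (1 : R)) v = G.twoDegree v := by
  simp [pow_two, ← mulVec_mulVec, twoDegree]

theorem adjMatrix_mulVec_signVector_apply [Ring R] {V₁ : Finset V}
    (hV₁ : ∀ u v, G.Adj u v → (u ∈ V₁ ↔ v ∉ V₁)) (v : V) :
    (G.adjMatrix R *ᵥ signVector R V₁) v = -(G.degree v * signVector R V₁ v) := by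
  rw [adjMatrix_mulVec_apply, Finset.sum_congr rfl fun u hu =>
    signVector_eq_neg_of_adj hV₁ ((G.mem_neighborFinset v u).mp hu)]
  simp

theorem adjMatrix_sq_mulVec_signVector_apply [Ring R] {V₁ : Finset V}
    (hV₁ : ∀ u v, G.Adj u v → (u ∈ V₁ ↔ v ∉ V₁)) (v : V) :
    (G.adjMatrix R ^ 2 *ᵥ signVector R V₁) v = G.twoDegree v * signVector R V₁ v := by
  rw [pow_two, ← mulVec_mulVec, adjMatrix_mulVec_apply]
  calc ∑ u ∈ G.neighborFinset v, (G.adjMatrix R *ᵥ signVector R V₁) u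
      = ∑ u ∈ G.neighborFinset v, (G.degree u : R) * signVector R V₁ v :=
        Finset.sum_congr rfl fun u hu => by
          rw [G.adjMatrix_mulVec_signVector_apply hV₁,
            signVector_eq_neg_of_adj hV₁ ((G.mem_neighborFinset v u).mp hu), mul_neg, neg_neg]
    _ = G.twoDegree v * signVector R V₁ v := by simp [twoDegree, Finset.sum_mul]

end adjMatrix

variable {G}

theorem minDegree_mul_degree_eq_of_adj {m : ℕ} (hm : ∀ u, G.twoDegree u = m) {v w : V}
    (hv : G.degree v = G.minDegree) (hvw : G.Adj v w) : G.minDegree * G.degree w = m := by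
  have hsum : ∑ u ∈ G.neighborFinset v, G.minDegree * G.degree u =
      ∑ _u ∈ G.neighborFinset v, m := by
    rw [← Finset.mul_sum, Finset.sum_const, card_neighborFinset_eq_degree, hv, smul_eq_mul]
    exact congrArg _ (hm v)
  refine (Finset.sum_eq_sum_iff_of_le fun u _ => ?_).mp hsum w (by simpa using hvw)
  exact (hm u).symm ▸ G.minDegree_mul_degree_le_twoDegree u

theorem degree_eq_minDegree_of_adj {v w : V} (hv : G.twoDegree v = G.minDegree * G.degree v)
    (hvw : G.Adj v w) : G.degree w = G.minDegree := by
  have hsum : ∑ _u ∈ G.neighborFinset v, G.minDegree = ∑ u ∈ G.neighborFinset v, G.degree u := by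
    rw [Finset.sum_const, card_neighborFinset_eq_degree, smul_eq_mul, mul_comm]
    exact hv.symm
  exact ((Finset.sum_eq_sum_iff_of_le fun u _ => G.minDegree_le_degree u).mp hsum w
    (by simpa using hvw)).symm

theorem Connected.isBiregular_of_twoDegree_eq (hG : G.Connected) (V₁ : Set V)
    (hV₁ : ∀ u v, G.Adj u v → (u ∈ V₁ ↔ v ∉ V₁)) (ht : ∀ v w, G.twoDegree v = G.twoDegree w) :
    G.IsBiregular := by
  classical
  have : Nonempty V := hG.nonempty
  obtain ⟨v₀, hv₀⟩ := G.exists_minimal_degree_vertex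
  set W : Set V := {v | v ∈ V₁ ↔ v₀ ∈ V₁}
  have hW : ∀ u v, G.Adj u v → (u ∈ W ↔ v ∉ W) := fun u v huv => by
    have := hV₁ u v huv
    simp only [W, Set.mem_ofPred_eq]
    tauto
  set m := G.twoDegree v₀
  have hm : ∀ v, G.twoDegree v = m := fun v => ht v v₀
  have hdeg : ∀ v, if v ∈ W then G.degree v = G.minDegree else G.minDegree * G.degree v = m := by
    refine hG.preconnected.forall_of_adj_imp (fun u v huv hu => ?_) (v₀ := v₀) (by simp [W, hv₀])
    by_cases huW : u ∈ W
    · simp only [huW, (hW u v huv).mp huW, if_true, if_false] at hu ⊢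
      exact minDegree_mul_degree_eq_of_adj hm hu huv
    · have hvW : v ∈ W := by simpa [huW] using (hW u v huv).not
      simp only [huW, hvW, if_true, if_false] at hu ⊢
      exact degree_eq_minDegree_of_adj ((hm u).trans hu.symm) huv
  refine ⟨W, G.minDegree, m / G.minDegree, hW, fun v hv => by simpa [hv] using hdeg v,
    fun v hv => ?_⟩
  have : Nontrivial V := ⟨⟨v, v₀, by rintro rfl; exact hv (by simp [W])⟩⟩
  exact Nat.eq_div_of_mul_eq_right hG.preconnected.minDegree_pos_of_nontrivial.ne'
    (by simpa [hv] using hdeg v)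

end SimpleGraph

/-- Let `G` be a connected bipartite graph with bipartition `V₁ ∪ V₂`.  If
either the all-ones vector `𝟏` or the vector `𝟏′` (equal to `1` on `V₁` and
`−1` on `V₂`) is an eigenvector of `A²`, then `G` is biregular. -/
theorem biregular_of_ones_eigenvector_of_adj_sq
    {V : Type*} [Fintype V] [DecidableEq V]
    (G : SimpleGraph V) [DecidableRel G.Adj] (hconn : G.Connected)
    (V₁ : Finset V)
    (hbip : ∀ u v : V, G.Adj u v → (u ∈ V₁ ↔ v ∉ V₁))
    (A : Matrix V V ℝ)
    (hA : A = G.adjMatrix ℝ)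
    (heig :
      (∃ μ : ℝ, (A ^ 2).mulVec (fun _ => (1 : ℝ)) = μ • fun _ => (1 : ℝ)) ∨
      (∃ μ : ℝ, (A ^ 2).mulVec (fun v => if v ∈ V₁ then (1 : ℝ) else -1) =
        μ • fun v => if v ∈ V₁ then (1 : ℝ) else -1)) :
    ∃ (W : Set V) (d₁ d₂ : ℕ),
      (∀ u v : V, G.Adj u v → (u ∈ W ↔ v ∉ W)) ∧
      (∀ v ∈ W, G.degree v = d₁) ∧ (∀ v ∉ W, G.degree v = d₂) := by
  subst hA
  obtain ⟨μ, hμ⟩ : ∃ μ : ℝ, ∀ v, (G.twoDegree v : ℝ) = μ := by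
    rcases heig with ⟨μ, h⟩ | ⟨μ, h⟩
    · exact ⟨μ, fun v => by simpa [G.adjMatrix_sq_mulVec_one_apply] using congrFun h v⟩
    · have h' : G.adjMatrix ℝ ^ 2 *ᵥ signVector ℝ V₁ = μ • signVector ℝ V₁ := h
      refine ⟨μ, fun v => mul_right_cancel₀ (b := signVector ℝ V₁ v)
        (by unfold signVector; split_ifs <;> norm_num) ?_⟩
      rw [← G.adjMatrix_sq_mulVec_signVector_apply hbip, h', Pi.smul_apply, smul_eq_mul]
  exact hconn.isBiregular_of_twoDegree_eq V₁ hbip fun v w => by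
    exact_mod_cast (hμ v).trans (hμ w).symm
end

section
/- Let G be a connected graph and let w be the vector whose coordinate at each vertex u is √(d_u), where d_u is the degree of u. If w is an eigenvector of A, then G is regular or biregular. -/
/-!
Write `δ` and `Δ` for the minimum and maximum degree and `μ` for the eigenvalue, so that
`∑_{v ~ u} √d_v = μ √d_u` at every vertex `u`. The left side lies between `d_u √δ` and `d_u √Δ`.
Evaluating at a vertex of degree `Δ` gives `μ ≥ √(δΔ)`, and at a vertex of degree `δ` gives
`μ ≤ √(δΔ)`. Hence `μ = √(δΔ)`, and both bounds are attained there: all neighbours of a vertex of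
degree `Δ` have degree `δ` and vice versa. By connectivity every degree is `δ` or `Δ`, and when
`δ ≠ Δ` the vertices of degree `Δ` form one side of a bipartition.
-/

open Finset

namespace SimpleGraph

variable {V : Type*}

theorem Reachable.of_adj_imp {G : SimpleGraph V} (P : V → Prop)
    (hP : ∀ a b, G.Adj a b → P a → P b) {u v : V} (h : G.Reachable u v) (hu : P u) : P v := by
  obtain ⟨p⟩ := h
  induction p with
  | nil => exact hu
  | cons hadj _ ih => exact ih (hP _ _ hadj hu)

variable [Fintype V] {G : SimpleGraph V} [DecidableRel G.Adj]

theorem sum_sqrt_degree_le (u : V) :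
    ∑ v ∈ G.neighborFinset u, √(G.degree v) ≤ G.degree u * √G.maxDegree := by
  calc ∑ v ∈ G.neighborFinset u, √(G.degree v)
      ≤ ∑ _v ∈ G.neighborFinset u, √G.maxDegree :=
        sum_le_sum fun v _ => Real.sqrt_le_sqrt (by exact_mod_cast G.degree_le_maxDegree v)
    _ = G.degree u * √G.maxDegree := by simp

theorem degree_mul_sqrt_minDegree_le_sum (u : V) :
    G.degree u * √G.minDegree ≤ ∑ v ∈ G.neighborFinset u, √(G.degree v) := by
  calc (G.degree u : ℝ) * √G.minDegree = ∑ _v ∈ G.neighborFinset u, √G.minDegree := by simp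
    _ ≤ ∑ v ∈ G.neighborFinset u, √(G.degree v) :=
        sum_le_sum fun v _ => Real.sqrt_le_sqrt (by exact_mod_cast G.minDegree_le_degree v)

section SqrtDegreeEigenvector

variable {μ : ℝ} (hμ : ∀ u, ∑ v ∈ G.neighborFinset u, √(G.degree v) = μ * √(G.degree u))
include hμ

theorem eigenvalue_eq_sqrt_minDegree_mul_sqrt_maxDegree [Nonempty V] (hδ : 0 < G.minDegree) :
    μ = √G.minDegree * √G.maxDegree := by
  obtain ⟨umin, humin⟩ := G.exists_minimal_degree_vertex
  obtain ⟨umax, humax⟩ := G.exists_maximal_degree_vertex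
  have hδ' : (0 : ℝ) < √G.minDegree := Real.sqrt_pos.2 (by exact_mod_cast hδ)
  have hΔ' : (0 : ℝ) < √G.maxDegree :=
    Real.sqrt_pos.2 (by exact_mod_cast hδ.trans_le (G.minDegree_le_degree umax |>.trans humax.ge))
  have hupper : μ * √G.minDegree ≤ √G.minDegree * √G.minDegree * √G.maxDegree := by
    rw [Real.mul_self_sqrt (Nat.cast_nonneg _), humin, ← hμ umin]
    exact sum_sqrt_degree_le umin
  have hlower : √G.maxDegree * √G.maxDegree * √G.minDegree ≤ μ * √G.maxDegree := by
    rw [Real.mul_self_sqrt (Nat.cast_nonneg _), humax, ← hμ umax]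
    exact degree_mul_sqrt_minDegree_le_sum umax
  apply le_antisymm
  · nlinarith
  · nlinarith

theorem degree_eq_minDegree_of_adj_s14 (hδ : 0 < G.minDegree) {u v : V}
    (hu : G.degree u = G.maxDegree) (huv : G.Adj u v) : G.degree v = G.minDegree := by
  have : Nonempty V := ⟨u⟩
  have hsum :
      ∑ _x ∈ G.neighborFinset u, √G.minDegree = ∑ x ∈ G.neighborFinset u, √(G.degree x) := by
    rw [hμ u, eigenvalue_eq_sqrt_minDegree_mul_sqrt_maxDegree hμ hδ, hu, sum_const,
      card_neighborFinset_eq_degree, hu, nsmul_eq_mul, mul_assoc,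
      Real.mul_self_sqrt (Nat.cast_nonneg _), mul_comm]
  have hsqrt := (sum_eq_sum_iff_of_le fun x _ =>
    Real.sqrt_le_sqrt (by exact_mod_cast G.minDegree_le_degree x)).1 hsum v
    ((mem_neighborFinset _ _ _).2 huv)
  exact_mod_cast (Real.sqrt_inj (Nat.cast_nonneg _) (Nat.cast_nonneg _)).1 hsqrt.symm

theorem degree_eq_maxDegree_of_adj (hδ : 0 < G.minDegree) {u v : V}
    (hu : G.degree u = G.minDegree) (huv : G.Adj u v) : G.degree v = G.maxDegree := by
  have : Nonempty V := ⟨u⟩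
  have hsum :
      ∑ x ∈ G.neighborFinset u, √(G.degree x) = ∑ _x ∈ G.neighborFinset u, √G.maxDegree := by
    rw [hμ u, eigenvalue_eq_sqrt_minDegree_mul_sqrt_maxDegree hμ hδ, hu, sum_const,
      card_neighborFinset_eq_degree, hu, nsmul_eq_mul, mul_right_comm,
      Real.mul_self_sqrt (Nat.cast_nonneg _)]
  have hsqrt := (sum_eq_sum_iff_of_le fun x _ =>
    Real.sqrt_le_sqrt (by exact_mod_cast G.degree_le_maxDegree x)).1 hsum v
    ((mem_neighborFinset _ _ _).2 huv)
  exact_mod_cast (Real.sqrt_inj (Nat.cast_nonneg _) (Nat.cast_nonneg _)).1 hsqrt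

theorem Preconnected.degree_eq_minDegree_or_maxDegree (hconn : G.Preconnected)
    (hδ : 0 < G.minDegree) (v : V) : G.degree v = G.minDegree ∨ G.degree v = G.maxDegree := by
  have : Nonempty V := ⟨v⟩
  obtain ⟨u, hu⟩ := G.exists_minimal_degree_vertex
  refine (hconn u v).of_adj_imp
    (fun x => G.degree x = G.minDegree ∨ G.degree x = G.maxDegree) ?_ (Or.inl hu.symm)
  rintro a b hab (ha | ha)
  · exact Or.inr (degree_eq_maxDegree_of_adj hμ hδ ha hab)
  · exact Or.inl (degree_eq_minDegree_of_adj_s14 hμ hδ ha hab)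

end SqrtDegreeEigenvector

end SimpleGraph

open SimpleGraph in
theorem regular_or_biregular_of_sqrt_degree_eigenvector_adj_general
    {V : Type*} [Fintype V]
    (G : SimpleGraph V) [DecidableRel G.Adj] (hconn : G.Connected)
    (A : Matrix V V ℝ)
    (hA : A = G.adjMatrix ℝ)
    (w : V → ℝ) (hw : w = fun u => Real.sqrt (G.degree u))
    (heig : ∃ μ : ℝ, A.mulVec w = μ • w) :
    (∃ d : ℕ, G.IsRegularOfDegree d) ∨
    (∃ (W : Set V) (d₁ d₂ : ℕ),
      (∀ u v : V, G.Adj u v → (u ∈ W ↔ v ∉ W)) ∧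
      (∀ v ∈ W, G.degree v = d₁) ∧ (∀ v ∉ W, G.degree v = d₂)) := by
  subst hA hw
  obtain ⟨μ, hμ⟩ := heig
  have hsum u : ∑ v ∈ G.neighborFinset u, √(G.degree v) = μ * √(G.degree u) := by
    simpa [adjMatrix_mulVec_apply] using congrFun hμ u
  by_cases hδΔ : G.minDegree = G.maxDegree
  · exact .inl ⟨G.minDegree, fun v =>
      le_antisymm (hδΔ ▸ G.degree_le_maxDegree v) (G.minDegree_le_degree v)⟩
  right
  have := hconn.nonempty
  have : Nontrivial V := by
    obtain ⟨u, hu⟩ := G.exists_minimal_degree_vertex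
    obtain ⟨v, hv⟩ := G.exists_maximal_degree_vertex
    exact ⟨u, v, fun h => hδΔ (by rw [hu, hv, h])⟩
  have hδ := hconn.preconnected.minDegree_pos_of_nontrivial
  have hdeg := hconn.preconnected.degree_eq_minDegree_or_maxDegree hsum hδ
  refine ⟨{v | G.degree v = G.maxDegree}, G.maxDegree, G.minDegree, fun u v huv => ?_,
    fun v hv => hv, fun v hv => (hdeg v).resolve_right hv⟩
  constructor
  · intro hu hv
    exact hδΔ ((degree_eq_minDegree_of_adj_s14 hsum hδ hu huv).symm.trans hv)
  · intro hv
    exact degree_eq_maxDegree_of_adj hsum hδ ((hdeg v).resolve_right hv) huv.symm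

/-- Let `G` be a connected graph and let `w` be the vector whose coordinate at
each vertex `u` is `√(d_u)`.  If `w` is an eigenvector of `A`, then `G` is
regular or biregular. -/
theorem regular_or_biregular_of_sqrt_degree_eigenvector_adj
    {V : Type*} [Fintype V] [DecidableEq V]
    (G : SimpleGraph V) [DecidableRel G.Adj] (hconn : G.Connected)
    (A : Matrix V V ℝ)
    (hA : A = G.adjMatrix ℝ)
    (w : V → ℝ) (hw : w = fun u => Real.sqrt (G.degree u))
    (heig : ∃ μ : ℝ, A.mulVec w = μ • w) :
    (∃ d : ℕ, G.IsRegularOfDegree d) ∨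
    (∃ (W : Set V) (d₁ d₂ : ℕ),
      (∀ u v : V, G.Adj u v → (u ∈ W ↔ v ∉ W)) ∧
      (∀ v ∈ W, G.degree v = d₁) ∧ (∀ v ∉ W, G.degree v = d₂)) :=
  regular_or_biregular_of_sqrt_degree_eigenvector_adj_general G hconn A hA w hw heig
end

section
/- Let G be a connected graph with no isolated vertices, r a positive integer, and f a real polynomial. If 𝓛^r = f(A), then G is regular or biregular. -/
/-!
Since `𝓛` is positive semidefinite, it is the `r`-th root of `𝓛 ^ r = f(A)` under the continuous
functional calculus, so it commutes with `A`. Writing `S = D^{-1/2} = diag(s_v)`, we have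
`𝓛 = 1 - S A S`, so `A` commutes with `S A S`. Comparing `(u, v)` entries gives
`(A S A)_{uv} s_v = s_u (A S A)_{uv}`, and `(A S A)_{uv} > 0` as soon as `u` and `v` have a common
neighbour. Hence degrees are constant along walks of even length: in a connected graph with an odd
closed walk this makes `G` regular, and otherwise `G` is bipartite and both colour classes are
regular.
-/

open Matrix Polynomial
open scoped ComplexOrder

namespace Matrix

variable {n : Type*} [Fintype n] [DecidableEq n]

section PosSemidef

variable {𝕜 : Type*} [RCLike 𝕜] {B : Matrix n n 𝕜}

theorem PosSemidef.cfc_rpow_inv_pow (hB : B.PosSemidef) {r : ℕ} (hr : r ≠ 0) :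
    cfc (fun x : ℝ => x ^ (r⁻¹ : ℝ)) (B ^ r) = B := by
  have hspec : ∀ x ∈ spectrum ℝ B, 0 ≤ x := by
    rw [hB.isHermitian.spectrum_real_eq_range_eigenvalues]
    rintro _ ⟨i, rfl⟩
    exact hB.eigenvalues_nonneg i
  have : IsSelfAdjoint B := hB.isHermitian
  rw [← cfc_pow_id (R := ℝ) B r, ← cfc_comp _ _ B]
  conv_rhs => rw [← cfc_id ℝ B]
  exact cfc_congr fun x hx => Real.pow_rpow_inv_natCast (hspec x hx) hr

theorem PosSemidef.commute_of_commute_pow (hB : B.PosSemidef) {r : ℕ} (hr : r ≠ 0)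
    {C : Matrix n n 𝕜} (h : Commute (B ^ r) C) : Commute B C :=
  hB.cfc_rpow_inv_pow hr ▸ h.cfc_real _

end PosSemidef

theorem apply_eq_of_commute_diagonal_mul_mul_diagonal {R : Type*} [CommRing R] [NoZeroDivisors R]
    {A : Matrix n n R} {s : n → R} (h : Commute A (diagonal s * A * diagonal s)) {u v : n}
    (huv : (A * diagonal s * A) u v ≠ 0) : s u = s v := by
  have hl : (A * (diagonal s * A * diagonal s)) u v = (A * diagonal s * A) u v * s v := by
    simp only [← mul_assoc, mul_diagonal]
  have hr : (diagonal s * A * diagonal s * A) u v = s u * (A * diagonal s * A) u v := by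
    simp only [mul_assoc, diagonal_mul]
  have key := congr_fun₂ h.eq u v
  rw [hl, hr, mul_comm (s u)] at key
  exact (mul_left_cancel₀ huv key).symm

end Matrix

namespace SimpleGraph

variable {V : Type*} {G : SimpleGraph V}

theorem adjMatrix_mul_diagonal_mul_adjMatrix_pos [Fintype V] [DecidableEq V] [DecidableRel G.Adj]
    {R : Type*} [Semiring R] [PartialOrder R] [IsOrderedRing R] {s : V → R}
    (hs : ∀ x, 0 ≤ s x) {u w v : V} (huw : G.Adj u w) (hwv : G.Adj w v) (hw : 0 < s w) :
    0 < (G.adjMatrix R * diagonal s * G.adjMatrix R) u v := by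
  rw [mul_apply]
  calc 0 < (G.adjMatrix R * diagonal s) u w * G.adjMatrix R w v := by simp [huw, hwv, hw]
    _ ≤ _ := Finset.single_le_sum
        (f := fun x => (G.adjMatrix R * diagonal s) u x * G.adjMatrix R x v)
        (fun x _ => by simp only [mul_diagonal, adjMatrix_apply]; split_ifs <;> simp [hs x])
        (Finset.mem_univ w)

section TwoStep

variable {α : Type*} {g : V → α}

theorem Walk.apply_eq_of_even_length (hg : ∀ ⦃u w v⦄, G.Adj u w → G.Adj w v → g u = g v) :
    ∀ {u v : V} (p : G.Walk u v), Even p.length → g u = g v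
  | _, _, .nil, _ => rfl
  | _, _, .cons _ .nil, hp => by simp at hp
  | _, _, .cons huw (.cons hwx p), hp => by
    rw [length_cons, length_cons, Nat.even_add_one, Nat.even_add_one, not_not] at hp
    exact (hg huw hwx).trans (apply_eq_of_even_length hg p hp)

theorem Connected.exists_walk_even_length_of_odd_loop (hG : G.Connected) {x : V}
    (c : G.Walk x x) (hc : Odd c.length) (u v : V) : ∃ p : G.Walk u v, Even p.length := by
  obtain ⟨p⟩ := hG u x
  obtain ⟨q⟩ := hG x v
  rcases Nat.even_or_odd (p.append q).length with h | h
  · exact ⟨p.append q, h⟩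
  · refine ⟨(p.append c).append q, ?_⟩
    rw [Walk.length_append] at h
    rw [Walk.length_append, Walk.length_append, add_right_comm]
    exact h.add_odd hc

theorem Connected.exists_const_or_bipartition [Nonempty α] (hG : G.Connected)
    (hg : ∀ ⦃u w v⦄, G.Adj u w → G.Adj w v → g u = g v) :
    (∃ c, ∀ v, g v = c) ∨ ∃ (W : Set V) (c₁ c₂ : α), (∀ u v, G.Adj u v → (u ∈ W ↔ v ∉ W)) ∧
      (∀ v ∈ W, g v = c₁) ∧ ∀ v ∉ W, g v = c₂ := by
  by_cases h2 : G.Colorable 2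
  · right
    let col : G.Coloring Bool := recolorOfEquiv G finTwoEquiv h2.some
    have hconst : ∀ s : Set V, (∀ u ∈ s, ∀ v ∈ s, (col u ↔ col v)) → ∃ c, ∀ v ∈ s, g v = c :=
      fun s hs => (Set.pairwise_eq_iff_exists_eq s g).mp fun u hu v hv _ =>
        let p := (hG u v).some
        Walk.apply_eq_of_even_length hg p ((col.even_length_iff_congr p).mpr (hs u hu v hv))
    obtain ⟨c₁, hc₁⟩ := hconst {v | col v} (by simp_all)
    obtain ⟨c₂, hc₂⟩ := hconst {v | col v}ᶜ (by simp_all)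
    refine ⟨{v | col v}, c₁, c₂, fun u v huv => ?_, hc₁, hc₂⟩
    simpa [Bool.eq_not_iff] using col.valid huv
  · left
    obtain ⟨x, c, hc⟩ : ∃ x, ∃ c : G.Walk x x, Odd c.length := by
      simpa [two_colorable_iff_forall_loop_even] using h2
    obtain ⟨v₀⟩ := hG.nonempty
    refine ⟨g v₀, fun v => ?_⟩
    obtain ⟨p, hp⟩ := hG.exists_walk_even_length_of_odd_loop c hc v v₀
    exact Walk.apply_eq_of_even_length hg p hp

end TwoStep

end SimpleGraph

/-- If `G` is connected with no isolated vertices and `𝓛^r = f(A)` for some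
polynomial `f` and positive integer `r`, where `𝓛 = D^{-1/2} L D^{-1/2}` is the
normalized Laplacian, then `G` is regular or biregular. -/
theorem regular_or_biregular_of_normalized_laplacian_pow_eq_poly_adj
    {V : Type*} [Fintype V] [DecidableEq V]
    (G : SimpleGraph V) [DecidableRel G.Adj] (hconn : G.Connected)
    (hdeg : ∀ v : V, 0 < G.degree v)
    (r : ℕ) (hr : 0 < r) (f : Polynomial ℝ)
    (A D L NL : Matrix V V ℝ)
    (hA : A = G.adjMatrix ℝ)
    (hD : D = Matrix.diagonal fun v => (G.degree v : ℝ))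
    (hL : L = D - A)
    (hNL : NL = Matrix.diagonal (fun v => (Real.sqrt (G.degree v))⁻¹) * L *
      Matrix.diagonal (fun v => (Real.sqrt (G.degree v))⁻¹))
    (hrel : NL ^ r = Polynomial.aeval A f) :
    (∃ d : ℕ, G.IsRegularOfDegree d) ∨
    (∃ (W : Set V) (d₁ d₂ : ℕ),
      (∀ u v : V, G.Adj u v → (u ∈ W ↔ v ∉ W)) ∧
      (∀ v ∈ W, G.degree v = d₁) ∧ (∀ v ∉ W, G.degree v = d₂)) := by
  subst hA hD hL
  set s : V → ℝ := fun v => (√(G.degree v))⁻¹ with hs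
  have hs_pos : ∀ v, 0 < s v := fun v => by simp [hs, hdeg v]
  have hsds : ∀ v, s v * G.degree v * s v = 1 := fun v => by
    rw [mul_right_comm, hs, ← mul_inv, Real.mul_self_sqrt (Nat.cast_nonneg _)]
    exact inv_mul_cancel₀ (by exact_mod_cast (hdeg v).ne')
  have hNL_eq : NL = 1 - diagonal s * G.adjMatrix ℝ * diagonal s := by
    rw [hNL, mul_sub, sub_mul, diagonal_mul_diagonal, diagonal_mul_diagonal, ← diagonal_one]
    simp only [hsds]
  have hpsd : NL.PosSemidef := by
    have := (G.posSemidef_lapMatrix ℝ).conjTranspose_mul_mul_same (diagonal s)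
    rw [diagonal_conjTranspose, star_trivial] at this
    rwa [hNL]
  have hpow : Commute (NL ^ r) (G.adjMatrix ℝ) := by
    simpa [hrel] using ((commute_X f).map (aeval (G.adjMatrix ℝ))).symm
  have hcomm : Commute (G.adjMatrix ℝ) (diagonal s * G.adjMatrix ℝ * diagonal s) := by
    have := (hpsd.commute_of_commute_pow hr.ne' hpow).symm
    rw [hNL_eq] at this
    simpa using (Commute.one_right _).sub_right this
  refine hconn.exists_const_or_bipartition fun u w v huw hwv => ?_
  have hsuv := apply_eq_of_commute_diagonal_mul_mul_diagonal hcomm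
    (G.adjMatrix_mul_diagonal_mul_adjMatrix_pos (fun x => (hs_pos x).le) huw hwv (hs_pos w)).ne'
  simpa [hs] using hsuv
end

section
/- Let G be a simple graph on a finite nonempty vertex set with adjacency matrix A, and let J be the all-ones square matrix of the same size. There exists a real polynomial f such that f(A) = J if and only if G is connected and regular. -/
/-!
Entry `(i, j)` of a polynomial in `A` is a combination of walk counts from `i` to `j`, so
`f(A) = J` forces connectivity; and `A` commutes with `f(A) = J`, while `(AJ)_{vw} = deg v`
and `(JA)_{vw} = deg w`. Conversely, `A𝟙 = d𝟙`, so `d` is a root of the minimal polynomial `m`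
of `A`, and `q = m / (X - d)` satisfies `q(A) ≠ 0` and `A q(A) = d q(A)`. By connectivity the
`d`-eigenvectors of `A` are the constant vectors (they are the kernel of the Laplacian `dI - A`),
so every column of the symmetric matrix `q(A)` is constant, i.e. `q(A)` is a nonzero multiple
of `J`.
-/

open Matrix Polynomial

theorem Matrix.IsSymm.aeval {n R : Type*} [Fintype n] [DecidableEq n] [CommSemiring R]
    {A : Matrix n n R} (hA : A.IsSymm) (p : R[X]) : (aeval A p).IsSymm := by
  simp [IsSymm, aeval_eq_sum_range, transpose_sum, transpose_smul, hA.eq]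

theorem Matrix.IsSymm.eq_const_of_col_const {n α : Type*} {B : Matrix n n α} (hB : B.IsSymm)
    (hcol : ∀ i i' j, B i j = B i' j) (k : n) : B = of fun _ _ => B k k := by
  ext i j
  rw [of_apply, hcol i k j, hB.apply, hcol j k k]

theorem minpoly.exists_aeval_ne_zero_mul_eq_smul_of_isRoot {K A : Type*} [Field K] [Ring A]
    [Algebra K A] {x : A} (hx : IsIntegral K x) {c : K} (hc : (minpoly K x).IsRoot c) :
    ∃ q : K[X], Polynomial.aeval x q ≠ 0 ∧
      x * Polynomial.aeval x q = c • Polynomial.aeval x q := by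
  set q := minpoly K x /ₘ (X - C c)
  have hfac : (X - C c) * q = minpoly K x := mul_divByMonic_eq_iff_isRoot.2 hc
  refine ⟨q, ?_, ?_⟩
  · refine minpoly.aeval_ne_zero_of_dvdNotUnit_minpoly hx
      ((monic_X_sub_C c).of_mul_monic_left (hfac ▸ minpoly.monic hx)) ?_
    exact ⟨fun h => minpoly.ne_zero hx (by rw [← hfac, h, mul_zero]), X - C c,
      not_isUnit_X_sub_C c, by rw [mul_comm, hfac]⟩
  · have := congrArg (Polynomial.aeval x) hfac
    rw [map_mul, minpoly.aeval, map_sub, aeval_X, aeval_C, sub_mul, sub_eq_zero,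
      ← Algebra.smul_def] at this
    exact this

namespace SimpleGraph
variable {V : Type*} [Fintype V] (G : SimpleGraph V) [DecidableRel G.Adj]

theorem adjMatrix_mulVec_eq_smul_iff_forall_reachable [DecidableEq V] {d : ℕ}
    (hd : G.IsRegularOfDegree d) {x : V → ℝ} :
    G.adjMatrix ℝ *ᵥ x = (d : ℝ) • x ↔ ∀ i j, G.Reachable i j → x i = x j := by
  rw [← lapMatrix_mulVec_eq_zero_iff_forall_reachable, funext_iff, funext_iff]
  refine forall_congr' fun v => ?_
  rw [lapMatrix_mulVec_apply, adjMatrix_mulVec_apply, hd v, Pi.smul_apply, Pi.zero_apply,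
    sub_eq_zero, smul_eq_mul, eq_comm]

theorem reachable_of_aeval_adjMatrix_apply_ne_zero [DecidableEq V] {R : Type*} [CommSemiring R]
    {p : R[X]} {i j : V} (h : aeval (G.adjMatrix R) p i j ≠ 0) : G.Reachable i j := by
  by_contra hij
  have : IsEmpty (G.Walk i j) := not_nonempty_iff.mp hij
  refine h ?_
  simp [aeval_eq_sum_range, Matrix.sum_apply, adjMatrix_pow_apply_eq_card_walk]

theorem degree_eq_of_commute_adjMatrix_allOnes {R : Type*} [NonAssocSemiring R] [CharZero R]
    (h : Commute (G.adjMatrix R) (of fun _ _ => 1)) (v w : V) : G.degree v = G.degree w := by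
  have := congrFun (congrFun h.eq v) w
  simp only [adjMatrix_mul_apply, mul_adjMatrix_apply, of_apply, Finset.sum_const,
    nsmul_one] at this
  exact_mod_cast this

theorem isRoot_minpoly_adjMatrix [DecidableEq V] [Nonempty V] {d : ℕ}
    (hd : G.IsRegularOfDegree d) : (minpoly ℝ (G.adjMatrix ℝ)).IsRoot d := by
  rw [← minpoly_toLin']
  refine Module.End.isRoot_of_hasEigenvalue (Module.End.hasEigenvalue_of_hasEigenvector
    (x := fun _ => 1) ⟨Module.End.mem_eigenspace_iff.mpr ?_, one_ne_zero⟩)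
  ext v
  simp [hd v]

theorem exists_aeval_adjMatrix_eq_allOnes [DecidableEq V] (hG : G.Connected) {d : ℕ}
    (hd : G.IsRegularOfDegree d) : ∃ f : ℝ[X], aeval (G.adjMatrix ℝ) f = of fun _ _ => 1 := by
  have := hG.nonempty
  obtain ⟨q, hq, hqA⟩ := minpoly.exists_aeval_ne_zero_mul_eq_smul_of_isRoot
    (Algebra.IsIntegral.isIntegral _) (G.isRoot_minpoly_adjMatrix hd)
  set B := aeval (G.adjMatrix ℝ) q
  have hcol : ∀ i i' j, B i j = B i' j := by
    intro i i' j
    refine (G.adjMatrix_mulVec_eq_smul_iff_forall_reachable hd (x := fun k => B k j)).mp ?_ i i'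
      (hG.preconnected i i')
    ext k
    simpa [Matrix.mul_apply, mulVec, dotProduct] using congrFun (congrFun hqA k) j
  obtain ⟨k⟩ := this
  set c := B k k
  have hB : B = of fun _ _ => c := (G.isSymm_adjMatrix.aeval q).eq_const_of_col_const hcol k
  have hc : c ≠ 0 := fun h => hq (by rw [hB, h]; rfl)
  refine ⟨C c⁻¹ * q, ?_⟩
  rw [map_mul, aeval_C, ← Algebra.smul_def]
  change c⁻¹ • B = _
  rw [hB]
  ext
  simp [hc]

end SimpleGraph

/-- For a graph `G` on a nonempty finite vertex set, there exists a polynomial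
`f` with `f(A) = J` (the all-ones matrix) if and only if `G` is connected and
regular. -/
theorem poly_adj_eq_allOnes_iff_connected_regular
    {V : Type*} [Fintype V] [DecidableEq V] [Nonempty V]
    (G : SimpleGraph V) [DecidableRel G.Adj] :
    (∃ f : Polynomial ℝ,
        Polynomial.aeval (G.adjMatrix ℝ) f = Matrix.of fun _ _ : V => (1 : ℝ)) ↔
      (G.Connected ∧ ∃ d : ℕ, G.IsRegularOfDegree d) := by
  constructor
  · rintro ⟨f, hf⟩
    have hcomm : Commute (G.adjMatrix ℝ) (of fun _ _ : V => (1 : ℝ)) := by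
      rw [← hf]
      simpa using (Commute.all X f).map (aeval (G.adjMatrix ℝ))
    obtain ⟨v₀⟩ := ‹Nonempty V›
    refine ⟨⟨fun i j => G.reachable_of_aeval_adjMatrix_apply_ne_zero (p := f) ?_⟩,
      G.degree v₀, fun v => G.degree_eq_of_commute_adjMatrix_allOnes hcomm v v₀⟩
    simp [hf]
  · rintro ⟨hG, d, hd⟩
    exact G.exists_aeval_adjMatrix_eq_allOnes hG hd
end
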